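/- arXiv:math/0603305 — 5 statements merged into one kernel-verified Lean document; each statement's English description precedes it below -/
import Mathlib

section
/- If a group G has property P_nai, then G contains a non-abelian free subgroup of rank 2; in particular G is not amenable. -/
/-- `NaiPair f g` : the subgroup generated by `f` and `g` is canonically isomorphic to
the free product `⟨f⟩ ∗ ⟨g⟩`, i.e. the natural map from the free product of the cyclic
subgroups generated by `f` and `g` to the ambient group is injective. -/
def NaiPair {G : Type*} [Group G] (f g : G) : Prop :=
  Function.Injective
    (Monoid.Coprod.lift (Subgroup.zpowers f).subtype (Subgroup.zpowers g).subtype)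

/-- Property `P_nai` of Bekka–Cowling–de la Harpe. -/
def PNai (G : Type*) [Group G] : Prop :=
  ∀ F : Finset G, (∀ f ∈ F, f ≠ 1) →
    ∃ g₀ : G, ¬ IsOfFinOrder g₀ ∧ ∀ f ∈ F, NaiPair f g₀

/-- A discrete group is amenable iff it admits a left-invariant finitely additive
probability measure defined on all subsets. -/
def IsAmenable (G : Type*) [Group G] : Prop :=
  ∃ m : Set G → ℝ, m Set.univ = 1 ∧ (∀ A : Set G, 0 ≤ m A) ∧
    (∀ A B : Set G, Disjoint A B → m (A ∪ B) = m A + m B) ∧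
    (∀ (g : G) (A : Set G), m ((g * ·) '' A) = m A)


open FreeGroup in
lemma aux_cons_toWord {α : Type*} [DecidableEq α] (c : α × Bool) (w : FreeGroup α)
    (h : w.toWord.head? ≠ some (c.1, !c.2)) :
    (FreeGroup.mk [c] * w).toWord = c :: w.toWord := by
  conv_lhs => rw [← FreeGroup.mk_toWord (x := w), FreeGroup.mul_mk]
  rw [FreeGroup.toWord_mk, List.singleton_append, FreeGroup.reduce.cons,
    FreeGroup.reduce_toWord]
  generalize hL : w.toWord = L at h ⊢
  cases L with
  | nil => rfl
  | cons hd tl =>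
    simp only
    split_ifs with hc
    · exfalso
      apply h
      obtain ⟨h1, h2⟩ := hc
      simp only [List.head?_cons, Option.some.injEq]
      obtain ⟨a, b⟩ := hd
      simp_all
    · rfl

/-- The set of elements of the free group whose reduced word starts with letter `c`. -/
def auxStarts (c : Fin 2 × Bool) : Set (FreeGroup (Fin 2)) :=
  {w | w.toWord.head? = some c}

lemma auxStarts_disjoint {c c' : Fin 2 × Bool} (h : c ≠ c') :
    Disjoint (auxStarts c) (auxStarts c') := by
  rw [Set.disjoint_left]
  intro w hw hw'
  exact h (Option.some_injective _ (hw.symm.trans hw'))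

lemma aux_inv_of (i : Fin 2) : (FreeGroup.of i)⁻¹ = FreeGroup.mk [(i, false)] := by
  rw [inv_eq_iff_mul_eq_one, ← FreeGroup.toWord_eq_nil_iff]
  show (FreeGroup.mk [(i, true)] * FreeGroup.mk [(i, false)]).toWord = []
  rw [FreeGroup.mul_mk]
  simp [FreeGroup.toWord_mk, FreeGroup.reduce]

lemma aux_cover (i : Fin 2) :
    (Set.univ : Set (FreeGroup (Fin 2))) ⊆
      auxStarts (i, true) ∪ (FreeGroup.of i * ·) '' auxStarts (i, false) := by
  intro w _
  by_cases hw : w ∈ auxStarts (i, true)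
  · exact Or.inl hw
  · right
    refine ⟨(FreeGroup.of i)⁻¹ * w, ?_, by group⟩
    rw [aux_inv_of]
    show (FreeGroup.mk [(i, false)] * w).toWord.head? = some (i, false)
    rw [aux_cons_toWord (i, false) w (by simpa [auxStarts] using hw)]
    rfl

lemma freeGroup_not_amenable : ¬ IsAmenable (FreeGroup (Fin 2)) := by
  rintro ⟨m, hu, hpos, hadd, hinv⟩
  have mono : ∀ A B : Set (FreeGroup (Fin 2)), A ⊆ B → m A ≤ m B := by
    intro A B hAB
    have : m B = m A + m (B \ A) := by
      rw [← hadd A (B \ A) Set.disjoint_sdiff_right, Set.union_diff_cancel hAB]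
    rw [this]
    linarith [hpos (B \ A)]
  have subadd : ∀ A B : Set (FreeGroup (Fin 2)), m (A ∪ B) ≤ m A + m B := by
    intro A B
    have h1 : m (A ∪ B) = m A + m (B \ A) := by
      rw [← hadd A (B \ A) Set.disjoint_sdiff_right, Set.union_diff_self]
    rw [h1]
    linarith [mono _ _ (Set.diff_subset : B \ A ⊆ B)]
  have key : ∀ i : Fin 2, (1 : ℝ) ≤ m (auxStarts (i, true)) + m (auxStarts (i, false)) := by
    intro i
    calc (1 : ℝ) = m Set.univ := hu.symm
      _ ≤ m (auxStarts (i, true) ∪ (FreeGroup.of i * ·) '' auxStarts (i, false)) :=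
        mono _ _ (aux_cover i)
      _ ≤ m (auxStarts (i, true)) + m ((FreeGroup.of i * ·) '' auxStarts (i, false)) :=
        subadd _ _
      _ = _ := by rw [hinv]
  have hsum : m (auxStarts (0, true)) + m (auxStarts (0, false)) +
      m (auxStarts (1, true)) + m (auxStarts (1, false)) ≤ 1 := by
    have e1 : m (auxStarts (0, true) ∪ auxStarts (0, false)) =
        m (auxStarts (0, true)) + m (auxStarts (0, false)) :=
      hadd _ _ (auxStarts_disjoint (by decide))
    have e2 : m (auxStarts (0, true) ∪ auxStarts (0, false) ∪ auxStarts (1, true)) =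
        m (auxStarts (0, true)) + m (auxStarts (0, false)) + m (auxStarts (1, true)) := by
      rw [hadd _ _ (by
        rw [Set.disjoint_union_left]
        exact ⟨auxStarts_disjoint (by decide), auxStarts_disjoint (by decide)⟩), e1]
    have e3 : m (auxStarts (0, true) ∪ auxStarts (0, false) ∪ auxStarts (1, true)
        ∪ auxStarts (1, false)) =
        m (auxStarts (0, true)) + m (auxStarts (0, false)) + m (auxStarts (1, true)) +
          m (auxStarts (1, false)) := by
      rw [hadd _ _ (by
        rw [Set.disjoint_union_left, Set.disjoint_union_left]
        exact ⟨⟨auxStarts_disjoint (by decide), auxStarts_disjoint (by decide)⟩,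
          auxStarts_disjoint (by decide)⟩), e2]
    rw [← e3, ← hu]
    exact mono _ _ (Set.subset_univ _)
  linarith [key 0, key 1]

lemma aux_amenable_of_injective {H G : Type*} [Group H] [Group G] (ι : H →* G)
    (hι : Function.Injective ι) (hG : IsAmenable G) : IsAmenable H := by
  obtain ⟨m, hu, hpos, hadd, hinv⟩ := hG
  classical
  set sd := QuotientGroup.rightRel ι.range with hsd
  let s : G → G := fun g => (Quotient.mk sd g).out
  have hs : ∀ (x : H) (g : G), s (ι x * g) = s g := by
    intro x g
    show (Quotient.mk sd (ι x * g)).out = (Quotient.mk sd g).out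
    congr 1
    apply Quotient.sound
    show sd (ι x * g) g
    rw [hsd, QuotientGroup.rightRel_apply]
    refine ⟨x⁻¹, ?_⟩
    rw [map_inv]
    group
  let r : G → G := fun g => g * (s g)⁻¹
  have hrH : ∀ g, r g ∈ Set.range ι := by
    intro g
    have h1 : sd (s g) g := Quotient.exact (Quotient.out_eq (Quotient.mk sd g))
    rw [hsd, QuotientGroup.rightRel_apply] at h1
    obtain ⟨x, hx⟩ := h1
    exact ⟨x, hx⟩
  have hr : ∀ (x : H) (g : G), r (ι x * g) = ι x * r g := by
    intro x g
    show (ι x * g) * (s (ι x * g))⁻¹ = ι x * (g * (s g)⁻¹)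
    rw [hs]
    group
  refine ⟨fun A => m (r ⁻¹' (ι '' A)), ?_, fun A => hpos _, ?_, ?_⟩
  · show m (r ⁻¹' (ι '' Set.univ)) = 1
    have huniv : r ⁻¹' (ι '' Set.univ) = Set.univ := by
      apply Set.eq_univ_of_forall
      intro g
      obtain ⟨x, hx⟩ := hrH g
      exact ⟨x, trivial, hx⟩
    rw [huniv, hu]
  · intro A B hAB
    show m (r ⁻¹' (ι '' (A ∪ B))) = m (r ⁻¹' (ι '' A)) + m (r ⁻¹' (ι '' B))
    rw [Set.image_union, Set.preimage_union]
    exact hadd _ _ ((Set.disjoint_image_of_injective hι hAB).preimage r)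
  · intro x A
    show m (r ⁻¹' (ι '' ((x * ·) '' A))) = m (r ⁻¹' (ι '' A))
    have hset : r ⁻¹' (ι '' ((x * ·) '' A)) = (ι x * ·) '' (r ⁻¹' (ι '' A)) := by
      ext g
      constructor
      · rintro ⟨a, ⟨a', ha', rfl⟩, hg⟩
        refine ⟨(ι x)⁻¹ * g, ?_, by group⟩
        show r ((ι x)⁻¹ * g) ∈ ι '' A
        have h2 : r ((ι x)⁻¹ * g) = (ι x)⁻¹ * r g := by
          rw [← map_inv]; exact hr x⁻¹ g
        refine ⟨a', ha', ?_⟩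
        rw [h2, ← hg, map_mul]
        group
      · rintro ⟨g', hg', rfl⟩
        obtain ⟨a, ha, hga⟩ := hg'
        refine ⟨x * a, ⟨a, ha, rfl⟩, ?_⟩
        show ι (x * a) = r (ι x * g')
        rw [hr, map_mul, hga]
    rw [hset, hinv]

/-- For `g` of infinite order, `⟨g⟩` is isomorphic to `ℤ`. -/
noncomputable def auxZpowEquiv {G : Type*} [Group G] (g : G) (hg : ¬ IsOfFinOrder g) :
    Multiplicative ℤ ≃* Subgroup.zpowers g := by
  refine MulEquiv.ofBijective
    ((zpowersHom G g).codRestrict (Subgroup.zpowers g)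
      (fun n => ⟨n.toAdd, rfl⟩)) ⟨?_, ?_⟩
  · intro a b hab
    have h1 : g ^ a.toAdd = g ^ b.toAdd := congrArg Subtype.val hab
    have h2 := injective_zpow_iff_not_isOfFinOrder.mpr hg h1
    exact Multiplicative.toAdd.injective h2
  · rintro ⟨x, hx⟩
    rw [Subgroup.mem_zpowers_iff] at hx
    obtain ⟨k, hk⟩ := hx
    exact ⟨Multiplicative.ofAdd k, Subtype.ext hk⟩

lemma auxZpowEquiv_apply {G : Type*} [Group G] (g : G) (hg : ¬ IsOfFinOrder g) (n : ℤ) :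
    (auxZpowEquiv g hg (Multiplicative.ofAdd n) : G) = g ^ n := rfl

lemma aux_free_of_naipair {G : Type*} [Group G] {g₀ g₁ : G}
    (hg₀ : ¬ IsOfFinOrder g₀) (hg₁ : ¬ IsOfFinOrder g₁) (hnai : NaiPair g₀ g₁) :
    Function.Injective (FreeGroup.lift ![g₀, g₁] : FreeGroup (Fin 2) →* G) := by
  classical
  set A := Subgroup.zpowers g₀
  set B := Subgroup.zpowers g₁
  let a₀ : A := ⟨g₀, Subgroup.mem_zpowers g₀⟩
  let a₁ : B := ⟨g₁, Subgroup.mem_zpowers g₁⟩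
  let φ : FreeGroup (Fin 2) →* Monoid.Coprod A B :=
    FreeGroup.lift ![Monoid.Coprod.inl a₀, Monoid.Coprod.inr a₁]
  let e₀ := auxZpowEquiv g₀ hg₀
  let e₁ := auxZpowEquiv g₁ hg₁
  let k₀ : A →* FreeGroup (Fin 2) :=
    (zpowersHom _ (FreeGroup.of 0)).comp e₀.symm.toMonoidHom
  let k₁ : B →* FreeGroup (Fin 2) :=
    (zpowersHom _ (FreeGroup.of 1)).comp e₁.symm.toMonoidHom
  let ψ := Monoid.Coprod.lift k₀ k₁
  have he₀ : e₀.symm a₀ = Multiplicative.ofAdd 1 := by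
    rw [MulEquiv.symm_apply_eq]
    exact Subtype.ext (by rw [auxZpowEquiv_apply]; exact (zpow_one g₀).symm)
  have he₁ : e₁.symm a₁ = Multiplicative.ofAdd 1 := by
    rw [MulEquiv.symm_apply_eq]
    exact Subtype.ext (by rw [auxZpowEquiv_apply]; exact (zpow_one g₁).symm)
  have hretract : ψ.comp φ = MonoidHom.id (FreeGroup (Fin 2)) := by
    apply FreeGroup.ext_hom
    intro i
    fin_cases i
    · show ψ (φ (FreeGroup.of 0)) = FreeGroup.of 0
      have h1 : φ (FreeGroup.of 0) = Monoid.Coprod.inl a₀ := by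
        simp [φ]
      rw [h1]
      show k₀ a₀ = FreeGroup.of 0
      show zpowersHom _ (FreeGroup.of 0) (e₀.symm a₀) = FreeGroup.of 0
      rw [he₀, zpowersHom_apply]
      simp
    · show ψ (φ (FreeGroup.of 1)) = FreeGroup.of 1
      have h1 : φ (FreeGroup.of 1) = Monoid.Coprod.inr a₁ := by
        simp [φ]
      rw [h1]
      show k₁ a₁ = FreeGroup.of 1
      show zpowersHom _ (FreeGroup.of 1) (e₁.symm a₁) = FreeGroup.of 1
      rw [he₁, zpowersHom_apply]
      simp
  have hφinj : Function.Injective φ := by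
    have hli : ∀ w, ψ (φ w) = w := fun w => by
      rw [← MonoidHom.comp_apply, hretract]; rfl
    intro a b hab
    rw [← hli a, ← hli b, hab]
  have hcomp : (Monoid.Coprod.lift A.subtype B.subtype).comp φ =
      (FreeGroup.lift ![g₀, g₁] : FreeGroup (Fin 2) →* G) := by
    apply FreeGroup.ext_hom
    intro i
    fin_cases i
    · show Monoid.Coprod.lift A.subtype B.subtype (φ (FreeGroup.of 0)) = _
      have h1 : φ (FreeGroup.of 0) = Monoid.Coprod.inl a₀ := by simp [φ]
      rw [h1]
      simp [a₀]
    · show Monoid.Coprod.lift A.subtype B.subtype (φ (FreeGroup.of 1)) = _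
      have h1 : φ (FreeGroup.of 1) = Monoid.Coprod.inr a₁ := by simp [φ]
      rw [h1]
      simp [a₁]
  have h2 : Function.Injective ⇑((Monoid.Coprod.lift A.subtype B.subtype).comp φ) := by
    rw [MonoidHom.coe_comp]
    exact hnai.comp hφinj
  rw [hcomp] at h2
  exact h2


/-- A group with property `P_nai` contains a non-abelian free subgroup of rank 2,
and in particular is not amenable. -/
theorem stmt2 (G : Type*) [Group G] (h : PNai G) :
    (∃ a b : G,
      Function.Injective (FreeGroup.lift ![a, b] : FreeGroup (Fin 2) →* G)) ∧
    ¬ IsAmenable G := by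
  obtain ⟨g₀, hg₀, -⟩ := h ∅ (by simp)
  have hg₀ne : g₀ ≠ 1 := by
    rintro rfl
    exact hg₀ IsOfFinOrder.one
  obtain ⟨g₁, hg₁, hpair⟩ := h {g₀} (by simpa using hg₀ne)
  have hnai : NaiPair g₀ g₁ := hpair g₀ (Finset.mem_singleton_self g₀)
  have hinj : Function.Injective (FreeGroup.lift ![g₀, g₁] : FreeGroup (Fin 2) →* G) :=
    aux_free_of_naipair hg₀ hg₁ hnai
  exact ⟨⟨g₀, g₁, hinj⟩,
    fun hA => freeGroup_not_amenable (aux_amenable_of_injective _ hinj hA)⟩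
end

section
/- If a group G has property P_nai and G is non-trivial, then G is icc: every conjugacy class of a non-identity element is infinite. -/
open Monoid

/-- In a free product, a "commutator-shaped" product of nontrivial elements from two
distinct factors is nontrivial. -/
lemma coprodI_comm_ne_one {ι : Type*} {M : ι → Type*} [∀ i, Group (M i)] {i j : ι}
    (hij : i ≠ j) {a : M i} {b : M j} (ha : a ≠ 1) (hb : b ≠ 1) :
    CoprodI.of a * CoprodI.of b * CoprodI.of a⁻¹ * CoprodI.of b⁻¹ ≠ 1 := by
  classical
  let w : CoprodI.NeWord M i j :=
    .append (.append (.append (.singleton a ha) hij (.singleton b hb)) hij.symm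
      (.singleton a⁻¹ (inv_ne_one.2 ha))) hij (.singleton b⁻¹ (inv_ne_one.2 hb))
  intro h
  have hp : w.prod = 1 := by
    simpa [w, CoprodI.NeWord.append_prod, CoprodI.NeWord.prod_singleton, mul_assoc]
      using (by simpa [mul_assoc] using h)
  have hw : w.toWord.prod = 1 := hp
  have hempty : w.toWord = CoprodI.Word.empty := by
    apply (CoprodI.Word.equiv (M := M)).symm.injective
    simpa [CoprodI.Word.equiv] using hw
  have : w.toList = [] := congrArg CoprodI.Word.toList hempty
  exact CoprodI.NeWord.toList_ne_nil w this

/-- If `NaiPair f g` holds, `f` is nontrivial and `y` is a nontrivial element of the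
cyclic group generated by `g`, then `f` and `y` do not commute. -/
lemma naiPair_not_commute {G : Type*} [Group G] {f g : G} (h : NaiPair f g)
    (hf : f ≠ 1) {y : G} (hy : y ∈ Subgroup.zpowers g) (hy1 : y ≠ 1) : f * y ≠ y * f := by
  classical
  intro hc
  set H := Subgroup.zpowers f
  set K := Subgroup.zpowers g
  let a : H := ⟨f, Subgroup.mem_zpowers f⟩
  let b : K := ⟨y, hy⟩
  have ha : a ≠ 1 := by simpa [a, Subtype.ext_iff] using hf
  have hb : b ≠ 1 := by simpa [b, Subtype.ext_iff] using hy1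
  have key : (Coprod.inl a : Coprod ↥H ↥K) * Coprod.inr b = Coprod.inr b * Coprod.inl a := by
    apply h
    simpa [a, b] using hc
  -- map to the indexed free product over `Bool`
  let fam : Bool → Type _ := fun t => ↥(cond t H K)
  let ψ : Coprod ↥H ↥K →* CoprodI fam :=
    Coprod.lift (CoprodI.of (M := fam) (i := true)) (CoprodI.of (M := fam) (i := false))
  have key' : (CoprodI.of (M := fam) (i := true) a) * CoprodI.of (M := fam) (i := false) b
      = CoprodI.of (M := fam) (i := false) b * CoprodI.of (M := fam) (i := true) a := by
    have := congrArg ψ key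
    simpa only [map_mul, ψ, Coprod.lift_apply_inl, Coprod.lift_apply_inr] using this
  have key2 : (CoprodI.of (M := fam) (i := true) a) * CoprodI.of (M := fam) (i := false) b *
      (CoprodI.of (M := fam) (i := true) a)⁻¹ * (CoprodI.of (M := fam) (i := false) b)⁻¹ = 1 := by
    rw [key', mul_assoc, mul_assoc, mul_inv_cancel_left, mul_inv_cancel]
  rw [← map_inv, ← map_inv] at key2
  exact coprodI_comm_ne_one (M := fam) (i := true) (j := false) (by simp) ha hb key2

/-- A non-trivial group with property `P_nai` is icc. -/
theorem stmt3 (G : Type*) [Group G] (h : PNai G) (hnt : Nontrivial G) :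
    Infinite G ∧ ∀ g : G, g ≠ 1 → {h' : G | ∃ x : G, x * g * x⁻¹ = h'}.Infinite := by
  obtain ⟨g₀, hg₀, -⟩ := h ∅ (by simp)
  have hinj := injective_zpow_iff_not_isOfFinOrder.2 hg₀
  refine ⟨Infinite.of_injective _ hinj, fun g hg => ?_⟩
  obtain ⟨c, hc, hnai⟩ := h {g} (by simpa using hg)
  have hcinj := injective_zpow_iff_not_isOfFinOrder.2 hc
  have hpair := hnai g (by simp)
  refine Set.infinite_of_injective_forall_mem
    (f := fun n : ℤ => c ^ n * g * (c ^ n)⁻¹) ?_ fun n => ⟨c ^ n, rfl⟩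
  · intro n m hnm
    by_contra hne
    have hk : c ^ (n - m) ≠ 1 := fun h1 =>
      hne (sub_eq_zero.1 (hcinj (by simpa using h1)))
    have e : c ^ (n - m) = (c ^ m)⁻¹ * c ^ n := by
      rw [sub_eq_neg_add, zpow_add, zpow_neg]
    have h2 : (c ^ m)⁻¹ * c ^ n * g = g * ((c ^ m)⁻¹ * c ^ n) := by
      have h1 := congrArg (fun x => (c ^ m)⁻¹ * x * c ^ n) hnm
      simp only [mul_assoc] at h1 ⊢
      simpa using h1
    have hcomm : g * c ^ (n - m) = c ^ (n - m) * g := by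
      rw [e, ← h2, mul_assoc]
    exact naiPair_not_commute hpair hg (Subgroup.mem_zpowers_iff.2 ⟨n - m, rfl⟩) hk hcomm
end

section
/- Every non-abelian group that is fully residually free satisfies property P_nai. -/
open Function Pointwise

namespace Stmt5Aux


/-- Horizontal shear permutation of `R × R`. -/
def shH {R : Type*} [CommRing R] (r : R) : Equiv.Perm (R × R) where
  toFun p := (p.1 + r * p.2, p.2)
  invFun p := (p.1 - r * p.2, p.2)
  left_inv p := by ext <;> simp
  right_inv p := by ext <;> simp

/-- Vertical shear permutation of `R × R`. -/
def shV {R : Type*} [CommRing R] (r : R) : Equiv.Perm (R × R) where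
  toFun p := (p.1, p.2 + r * p.1)
  invFun p := (p.1, p.2 - r * p.1)
  left_inv p := by ext <;> simp
  right_inv p := by ext <;> simp

variable {R : Type*} [CommRing R]

lemma shH_apply (r : R) (p : R × R) : shH r p = (p.1 + r * p.2, p.2) := rfl
lemma shV_apply (r : R) (p : R × R) : shV r p = (p.1, p.2 + r * p.1) := rfl

lemma shH_mul (r s : R) : shH r * shH s = shH (r + s) := by
  ext p <;> simp [shH, Equiv.Perm.mul_apply] <;> ring

lemma shV_mul (r s : R) : shV r * shV s = shV (r + s) := by
  ext p <;> simp [shV, Equiv.Perm.mul_apply] <;> ring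

/-- the homomorphism `r ↦ shH r`. -/
def shHhom (R : Type*) [CommRing R] : Multiplicative R →* Equiv.Perm (R × R) :=
  MonoidHom.mk' (fun r => shH r.toAdd) (fun a b => by
    simp only [toAdd_mul, ← shH_mul])

def shVhom (R : Type*) [CommRing R] : Multiplicative R →* Equiv.Perm (R × R) :=
  MonoidHom.mk' (fun r => shV r.toAdd) (fun a b => by
    simp only [toAdd_mul, ← shV_mul])

lemma shH_zpow (r : R) (n : ℤ) : (shH r) ^ n = shH (n • r) := by
  have := map_zpow (shHhom R) (Multiplicative.ofAdd r) n
  simpa [shHhom, toAdd_zpow] using this.symm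

lemma shV_zpow (r : R) (n : ℤ) : (shV r) ^ n = shV (n • r) := by
  have := map_zpow (shVhom R) (Multiplicative.ofAdd r) n
  simpa [shVhom, toAdd_zpow] using this.symm



/-- The two integral shears generate a free group: faithful ping-pong action. -/
theorem shear_lift_injective :
    Function.Injective (FreeGroup.lift (fun b : Bool => cond b (shH (2:ℤ)) (shV (2:ℤ)))) := by
  classical
  set a : Bool → Equiv.Perm (ℤ × ℤ) := fun b => cond b (shH (2:ℤ)) (shV (2:ℤ)) with ha
  have key : Function.Injective (Monoid.CoprodI.lift
      (fun i : Bool => (FreeGroup.lift fun _ : Unit => a i))) := by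
    apply Monoid.CoprodI.lift_injective_of_ping_pong _ _
      (fun i : Bool => if i then {p : ℤ × ℤ | |p.2| < |p.1|} else {p : ℤ × ℤ | |p.1| < |p.2|})
    · intro i
      cases i
      · exact ⟨(0, 1), by simp⟩
      · exact ⟨(1, 0), by simp⟩
    · intro i j hij
      have : i = !j := by cases i <;> cases j <;> simp_all
      subst this
      cases j <;>
      · simp only [Function.onFun]
        rw [Set.disjoint_left]
        intro p hp hp'
        simp only [Set.mem_setOf_eq, Bool.not_false, Bool.not_true, if_true, if_false,
          Bool.false_eq_true, Bool.true_eq_false] at hp hp'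
        omega
    · intro i j hij
      refine FreeGroup.freeGroupUnitEquivInt.forall_congr_left.mpr ?_
      intro n hne1
      change (FreeGroup.lift fun _ : Unit => a i) (FreeGroup.of () ^ n) • (_ : Set (ℤ × ℤ)) ⊆ _
      have hn : n ≠ 0 := by
        rintro rfl
        exact hne1 rfl
      have habs : 1 ≤ |n| := Int.one_le_abs hn
      simp only [map_zpow, FreeGroup.lift_apply_of]
      have : i = !j := by cases i <;> cases j <;> simp_all
      subst this
      cases j
      · -- j = false, i = true : shH
        simp only [Bool.not_false, ha, cond_true, cond_false, if_true, if_false]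
        rw [shH_zpow]
        rintro q ⟨p, hp, rfl⟩
        simp only [Set.mem_setOf_eq, Bool.false_eq_true, if_false, if_true] at hp ⊢
        rw [Equiv.Perm.smul_def, shH_apply]
        have h1 : |n • (2:ℤ) * p.2| = 2 * |n| * |p.2| := by
          rw [smul_eq_mul, abs_mul, abs_mul]
          simp [abs_of_nonneg, mul_comm]
        have h2 : |n • (2:ℤ) * p.2| - |p.1| ≤ |p.1 + n • (2:ℤ) * p.2| := by
          have h3 := abs_sub_abs_le_abs_sub (n • (2:ℤ) * p.2) (-p.1)
          simp only [abs_neg, sub_neg_eq_add] at h3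
          calc |n • (2:ℤ) * p.2| - |p.1| ≤ |n • (2:ℤ) * p.2 + p.1| := h3
          _ = |p.1 + n • (2:ℤ) * p.2| := by rw [add_comm]
        have hp2 : 0 ≤ |p.2| := abs_nonneg _
        nlinarith [abs_nonneg p.1]
      · -- j = true, i = false : shV
        simp only [Bool.not_true, ha, cond_true, cond_false, if_true, if_false]
        rw [shV_zpow]
        rintro q ⟨p, hp, rfl⟩
        simp only [Set.mem_setOf_eq, Bool.false_eq_true, if_false, if_true] at hp ⊢
        rw [Equiv.Perm.smul_def, shV_apply]
        have h2 : |n • (2:ℤ) * p.1| - |p.2| ≤ |p.2 + n • (2:ℤ) * p.1| := by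
          have h3 := abs_sub_abs_le_abs_sub (n • (2:ℤ) * p.1) (-p.2)
          simp only [abs_neg, sub_neg_eq_add] at h3
          calc |n • (2:ℤ) * p.1| - |p.2| ≤ |n • (2:ℤ) * p.1 + p.2| := h3
          _ = |p.2 + n • (2:ℤ) * p.1| := by rw [add_comm]
        have h1 : |n • (2:ℤ) * p.1| = 2 * |n| * |p.1| := by
          rw [smul_eq_mul, abs_mul, abs_mul]
          simp [abs_of_nonneg, mul_comm]
        nlinarith [abs_nonneg p.2]
    · right
      exact ⟨true, le_of_lt (lt_of_lt_of_le (by exact_mod_cast Cardinal.nat_lt_aleph0 3) (Cardinal.aleph0_le_mk (FreeGroup Unit)))⟩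
  have hcomp : FreeGroup.lift a =
      (Monoid.CoprodI.lift fun i : Bool => (FreeGroup.lift fun _ : Unit => a i)).comp
        (@freeGroupEquivCoprodI Bool).toMonoidHom := by
    refine FreeGroup.ext_hom _ _ fun i => ?_
    simp
  rw [hcomp, MonoidHom.coe_comp]
  exact key.comp (MulEquiv.injective freeGroupEquivCoprodI)


/-- Residual finiteness of the free group on two generators. -/
theorem exists_finite_quotient {w : FreeGroup Bool} (hw : w ≠ 1) :
    ∃ (Q : Type) (_ : Group Q) (_ : Finite Q) (ρ : FreeGroup Bool →* Q), ρ w ≠ 1 := by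
  classical
  set ν := FreeGroup.lift (fun b : Bool => cond b (shH (2:ℤ)) (shV (2:ℤ))) with hν
  have hν1 : ν w ≠ 1 := by
    intro h
    exact hw (shear_lift_injective (h.trans (map_one ν).symm))
  obtain ⟨pt, hpt⟩ : ∃ pt, ν w pt ≠ pt := by
    by_contra h
    push_neg at h
    exact hν1 (Equiv.ext h)
  set d1 : ℤ := (ν w pt).1 - pt.1 with hd1
  set d2 : ℤ := (ν w pt).2 - pt.2 with hd2
  have hd : d1 ≠ 0 ∨ d2 ≠ 0 := by
    by_contra h
    push_neg at h
    apply hpt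
    have : (ν w pt).1 = pt.1 := by omega
    have h2 : (ν w pt).2 = pt.2 := by omega
    exact Prod.ext this h2
  set N : ℕ := d1.natAbs + d2.natAbs + 1 with hN
  set π : ℤ × ℤ → ZMod N × ZMod N := fun p => ((p.1 : ZMod N), (p.2 : ZMod N)) with hπ
  set ρ := FreeGroup.lift (fun b : Bool => cond b (shH (2 : ZMod N)) (shV (2 : ZMod N))) with hρ
  have hequiv : ∀ x : FreeGroup Bool, ∀ p : ℤ × ℤ, ρ x (π p) = π (ν x p) := by
    intro x
    induction x using FreeGroup.induction_on with
    | C1 => intro p; simp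
    | of b =>
      intro p
      cases b <;>
        simp only [hρ, hν, FreeGroup.lift_apply_of, cond_true, cond_false, shH_apply, shV_apply, hπ] <;>
        · apply Prod.ext <;> push_cast <;> rfl
    | inv_of b hb =>
      intro p
      rw [map_inv, map_inv]
      have h1 := hb ((ν (FreeGroup.of b))⁻¹ p)
      rw [Equiv.Perm.inv_def, Equiv.apply_symm_apply] at h1
      rw [← h1, Equiv.Perm.inv_def, Equiv.symm_apply_apply, Equiv.Perm.inv_def]
    | mul x y hx hy =>
      intro p
      rw [map_mul, map_mul, Equiv.Perm.mul_apply, Equiv.Perm.mul_apply, hy, hx]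
  refine ⟨Equiv.Perm (ZMod N × ZMod N), inferInstance, ?_, ρ, ?_⟩
  · have : NeZero N := ⟨by omega⟩
    infer_instance
  · intro h
    have hcast : π (ν w pt) = π pt := by
      rw [← hequiv, h]
      rfl
    have hNz : (0:ℤ) < (N:ℤ) := by exact_mod_cast Nat.succ_pos _
    have key : ∀ a b : ℤ, (a : ZMod N) = (b : ZMod N) → (a - b).natAbs < N → a = b := by
      intro a b hab habs
      have : ((a - b : ℤ) : ZMod N) = 0 := by push_cast [hab]; ring
      have hdvd : (N:ℤ) ∣ (a - b) := (ZMod.intCast_zmod_eq_zero_iff_dvd _ _).mp this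
      rcases eq_or_ne (a - b) 0 with h0 | h0
      · omega
      · have := Int.le_of_dvd (abs_pos.mpr h0) ((dvd_abs _ _).mpr hdvd)
        rw [Int.abs_eq_natAbs] at this
        omega
    have e1 : (ν w pt).1 = pt.1 := by
      apply key _ _ (congrArg Prod.fst hcast)
      omega
    have e2 : (ν w pt).2 = pt.2 := by
      apply key _ _ (congrArg Prod.snd hcast)
      omega
    omega

/-- The Hopf property for the free group on two generators. -/
theorem hopf {η : FreeGroup Bool →* FreeGroup Bool} (hs : Surjective η) :
    Injective η := by
  rw [injective_iff_map_eq_one]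
  intro w hw
  by_contra hw1
  obtain ⟨Q, _, _, ρ, hρ⟩ := exists_finite_quotient hw1
  have hfin : Finite (FreeGroup Bool →* Q) := by
    have : Finite (Bool → Q) := inferInstance
    exact Finite.of_equiv _ (FreeGroup.lift (α := Bool) (β := Q))
  have hinj : Injective (fun h : FreeGroup Bool →* Q => h.comp η) := by
    intro h₁ h₂ hh
    exact (MonoidHom.cancel_right hs).mp hh
  obtain ⟨h, hh⟩ := (Finite.injective_iff_surjective.mp hinj) ρ
  have : ρ w = h (η w) := by rw [← hh]; rfl
  rw [hw, map_one] at this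
  exact hρ this


section Structural

variable {S : Type*}

/-- In a free group over a subsingleton type, every element is a power of the generator. -/
theorem subsingleton_eq_pow [Subsingleton S] (t₀ : S) (x : FreeGroup S) :
    ∃ k : ℤ, x = FreeGroup.of t₀ ^ k := by
  induction x using FreeGroup.induction_on with
  | C1 => exact ⟨0, by simp⟩
  | of t => exact ⟨1, by rw [Subsingleton.elim t t₀, zpow_one]⟩
  | inv_of t ht =>
    obtain ⟨k, hk⟩ := ht
    exact ⟨-k, by rw [hk, ← zpow_neg]⟩
  | mul x y hx hy =>
    obtain ⟨k, hk⟩ := hx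
    obtain ⟨l, hl⟩ := hy
    exact ⟨k + l, by rw [hk, hl, zpow_add]⟩

/-- In a free group over an empty type every element is trivial. -/
theorem isEmpty_eq_one [IsEmpty S] (x : FreeGroup S) : x = 1 := by
  induction x using FreeGroup.induction_on with
  | C1 => rfl
  | of t => exact (IsEmpty.false t).elim
  | inv_of t ht => rw [ht]; simp
  | mul x y hx hy => rw [hx, hy, one_mul]

theorem of_zpow_eq_one {t : S} {k : ℤ} (h : FreeGroup.of t ^ k = 1) : k = 0 := by
  classical
  have h2 := congrArg (FreeGroup.lift
    (fun s => if s = t then Multiplicative.ofAdd (1:ℤ) else 1)) h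
  rw [map_zpow, FreeGroup.lift_apply_of, if_pos rfl, show (FreeGroup.lift
    (fun s => if s = t then Multiplicative.ofAdd (1:ℤ) else 1)) 1 = 1 from map_one _] at h2
  have h3 := congrArg Multiplicative.toAdd h2
  rw [toAdd_zpow] at h3
  simpa using h3

theorem of_ne_one (t : S) : FreeGroup.of t ≠ 1 := by
  intro h
  have : FreeGroup.of t ^ (1:ℤ) = 1 := by simpa using h
  exact one_ne_zero (of_zpow_eq_one this)

/-- Distinct generators of a free group do not commute. -/
theorem of_not_commute {s t : S} (hst : s ≠ t) :
    ¬Commute (FreeGroup.of s) (FreeGroup.of t) := by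
  classical
  intro h
  have h2 : Commute (shH (2:ℤ)) (shV (2:ℤ)) := by
    have := congrArg (FreeGroup.lift
      (fun r => if r = s then shH (2:ℤ) else if r = t then shV (2:ℤ) else 1)) h
    simp only [map_mul, FreeGroup.lift_apply_of, if_pos rfl, if_neg (Ne.symm hst),
      if_neg hst] at this
    exact this
  have h3 := congrArg (fun e : Equiv.Perm (ℤ × ℤ) => e ((1:ℤ), (0:ℤ))) h2
  simp only [Equiv.Perm.mul_apply, shH_apply, shV_apply] at h3
  have h4 := congrArg Prod.fst h3
  norm_num at h4

/-- Every element of a free group lies in the subgroup generated by finitely many generators. -/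
theorem mem_closure_letters (x : FreeGroup S) :
    ∃ A : Finset S, x ∈ Subgroup.closure (FreeGroup.of '' ↑A) := by
  classical
  induction x using FreeGroup.induction_on with
  | C1 => exact ⟨∅, Subgroup.one_mem _⟩
  | of t => exact ⟨{t}, Subgroup.subset_closure ⟨t, by simp, rfl⟩⟩
  | inv_of t ht =>
    obtain ⟨A, hA⟩ := ht
    exact ⟨A, Subgroup.inv_mem _ hA⟩
  | mul x y hx hy =>
    obtain ⟨A, hA⟩ := hx
    obtain ⟨B, hB⟩ := hy
    refine ⟨A ∪ B, Subgroup.mul_mem _ ?_ ?_⟩ <;>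
      refine Subgroup.closure_mono (Set.image_mono ?_) (by assumption)
    · exact fun a ha => Finset.mem_union_left _ ha
    · exact fun a ha => Finset.mem_union_right _ ha

theorem generator_mem_of_closure {t : S} {A : Finset S}
    (h : FreeGroup.of t ∈ Subgroup.closure (FreeGroup.of '' (↑A : Set S))) : t ∈ A := by
  classical
  by_contra ht
  set χ : FreeGroup S →* Multiplicative ℤ :=
    FreeGroup.lift (fun s => if s = t then Multiplicative.ofAdd (1:ℤ) else 1) with hχ
  have hker : Subgroup.closure (FreeGroup.of '' (↑A : Set S)) ≤ χ.ker := by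
    rw [Subgroup.closure_le]
    rintro _ ⟨a, ha, rfl⟩
    have hat : a ≠ t := fun he => ht (he ▸ ha)
    simp [MonoidHom.mem_ker, hχ, FreeGroup.lift_apply_of, if_neg hat]
  have h1 : χ (FreeGroup.of t) = 1 := hker h
  rw [hχ, FreeGroup.lift_apply_of, if_pos rfl] at h1
  have := congrArg Multiplicative.toAdd h1
  simpa using this

theorem closure_of_bool : Subgroup.closure {FreeGroup.of false, FreeGroup.of true}
    = (⊤ : Subgroup (FreeGroup Bool)) := by
  rw [eq_top_iff]
  intro x _
  induction x using FreeGroup.induction_on with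
  | C1 => exact Subgroup.one_mem _
  | of b =>
    apply Subgroup.subset_closure
    cases b
    · exact Set.mem_insert _ _
    · exact Set.mem_insert_iff.mpr (Or.inr rfl)
  | inv_of b hb => exact Subgroup.inv_mem _ (hb (Subgroup.mem_top _))
  | mul x y hx hy => exact Subgroup.mul_mem _ (hx (Subgroup.mem_top _)) (hy (Subgroup.mem_top _))

end Structural


/-- Two non-commuting elements of a free group generate a free group of rank 2 freely. -/
theorem free_pair {β : Type*} {u v : FreeGroup β} (huv : ¬Commute u v) :
    Function.Injective (FreeGroup.lift (fun b : Bool => cond b v u)) := by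
  classical
  set ψ := FreeGroup.lift (fun b : Bool => cond b v u) with hψ
  have hu : ψ (FreeGroup.of false) = u := by rw [hψ, FreeGroup.lift_apply_of]; rfl
  have hv : ψ (FreeGroup.of true) = v := by rw [hψ, FreeGroup.lift_apply_of]; rfl
  obtain ⟨T, ⟨bas⟩⟩ := (inferInstance : IsFreeGroup ψ.range).nonempty_basis
  set θ : FreeGroup T ≃* ψ.range := bas.repr.symm with hθ
  set ε : FreeGroup Bool →* FreeGroup T := (bas.repr.toMonoidHom).comp ψ.rangeRestrict with hε
  have hεs : Surjective ε := by
    rw [hε, MonoidHom.coe_comp]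
    exact (MulEquiv.surjective bas.repr).comp ψ.rangeRestrict_surjective
  have hfact : ∀ x, ψ x = ((θ (ε x) : ψ.range) : FreeGroup β) := by
    intro x
    rw [hθ, hε]
    simp
  -- `T` is finite
  have hUV : Subgroup.closure {ε (FreeGroup.of false), ε (FreeGroup.of true)}
      = (⊤ : Subgroup (FreeGroup T)) := by
    have himg : (ε '' {FreeGroup.of false, FreeGroup.of true})
        = {ε (FreeGroup.of false), ε (FreeGroup.of true)} := by
      rw [Set.image_insert_eq, Set.image_singleton]
    calc Subgroup.closure {ε (FreeGroup.of false), ε (FreeGroup.of true)}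
        = Subgroup.map ε (Subgroup.closure {FreeGroup.of false, FreeGroup.of true}) := by
          rw [MonoidHom.map_closure, himg]
      _ = ⊤ := by rw [closure_of_bool, Subgroup.map_top_of_surjective _ hεs]
  obtain ⟨A₁, hA₁⟩ := mem_closure_letters (ε (FreeGroup.of false))
  obtain ⟨A₂, hA₂⟩ := mem_closure_letters (ε (FreeGroup.of true))
  have hsub : (⊤ : Subgroup (FreeGroup T)) ≤ Subgroup.closure (FreeGroup.of '' ↑(A₁ ∪ A₂)) := by
    rw [← hUV, Subgroup.closure_le]
    rintro x hx
    rcases hx with rfl | hx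
    · exact Subgroup.closure_mono (Set.image_mono (by intro a ha; exact Finset.mem_union_left _ ha)) hA₁
    · rw [Set.mem_singleton_iff] at hx
      subst hx
      exact Subgroup.closure_mono (Set.image_mono (by intro a ha; exact Finset.mem_union_right _ ha)) hA₂
  have hTmem : ∀ t : T, t ∈ A₁ ∪ A₂ := fun t =>
    generator_mem_of_closure (hsub (Subgroup.mem_top (FreeGroup.of t)))
  have hfinT : Finite T := Finite.of_injective
    (fun t => (⟨t, hTmem t⟩ : {x // x ∈ A₁ ∪ A₂})) (fun a b hab => Subtype.mk.inj hab)
  have : Fintype T := Fintype.ofFinite T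
  -- `T` has at most two elements
  have hcard2 : Fintype.card T ≤ 2 := by
    set Q := Multiplicative (ZMod 2) with hQ
    have hinj : Function.Injective
        (fun g : T → Q => fun b : Bool => ((FreeGroup.lift g).comp ε) (FreeGroup.of b)) := by
      intro g₁ g₂ hg
      have hcomp : (FreeGroup.lift g₁).comp ε = (FreeGroup.lift g₂).comp ε :=
        FreeGroup.ext_hom _ _ fun b => congrFun hg b
      have : FreeGroup.lift g₁ = FreeGroup.lift g₂ := (MonoidHom.cancel_right hεs).mp hcomp
      exact FreeGroup.lift.injective this
    have hle := Fintype.card_le_of_injective _ hinj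
    rw [Fintype.card_fun, Fintype.card_fun] at hle
    have hQ2 : Fintype.card Q = 2 := rfl
    rw [hQ2] at hle
    simp only [Fintype.card_bool] at hle
    exact (Nat.pow_le_pow_iff_right (by norm_num)).mp hle
  -- `T` has at least two elements
  have hcard1 : ¬ Fintype.card T ≤ 1 := by
    intro hc
    have : Subsingleton T := Fintype.card_le_one_iff_subsingleton.mp hc
    have hcomm : Commute (ε (FreeGroup.of false)) (ε (FreeGroup.of true)) := by
      cases isEmpty_or_nonempty T with
      | inl he =>
        rw [isEmpty_eq_one (ε (FreeGroup.of false)), isEmpty_eq_one (ε (FreeGroup.of true))]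
      | inr hne =>
        obtain ⟨t₀⟩ := hne
        obtain ⟨k, hk⟩ := subsingleton_eq_pow t₀ (ε (FreeGroup.of false))
        obtain ⟨l, hl⟩ := subsingleton_eq_pow t₀ (ε (FreeGroup.of true))
        rw [hk, hl]
        exact (Commute.refl _).zpow_zpow k l
    apply huv
    rw [← hu, ← hv, hfact, hfact]
    exact (hcomm.map θ.toMonoidHom).map (Subgroup.subtype ψ.range)
  have hcardT : Fintype.card T = 2 := by omega
  set e : T ≃ Bool := Fintype.equivOfCardEq (by rw [hcardT, Fintype.card_bool]) with he
  set η : FreeGroup Bool →* FreeGroup Bool :=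
    (FreeGroup.freeGroupCongr e).toMonoidHom.comp ε with hη
  have hηs : Surjective η := by
    rw [hη, MonoidHom.coe_comp]
    exact (FreeGroup.freeGroupCongr e).surjective.comp hεs
  have hηi : Injective η := hopf hηs
  have hεi : Injective ε := by
    intro x y hxy
    apply hηi
    rw [hη]
    simp only [MonoidHom.coe_comp, Function.comp_apply, hxy]
  intro x y hxy
  apply hεi
  apply θ.injective
  apply Subtype.val_injective
  rw [← hfact, ← hfact]
  exact hxy


/-- The closure of a pairwise-commuting set is pairwise commuting. -/
theorem closure_comm {G : Type*} [Group G] {s : Set G}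
    (hs : ∀ a ∈ s, ∀ b ∈ s, Commute a b) :
    ∀ x ∈ Subgroup.closure s, ∀ y ∈ Subgroup.closure s, Commute x y := by
  have h1 : Subgroup.closure s ≤ Subgroup.centralizer s := by
    rw [Subgroup.closure_le]
    intro a ha
    rw [SetLike.mem_coe, Subgroup.mem_centralizer_iff]
    intro b hb
    exact (hs b hb a ha).eq
  have h2 : Subgroup.closure s ≤ Subgroup.centralizer (Subgroup.closure s : Set G) := by
    rw [Subgroup.closure_le]
    intro a ha
    rw [SetLike.mem_coe, Subgroup.mem_centralizer_iff]
    intro b hb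
    have hb1 : b ∈ Subgroup.centralizer s := h1 hb
    rw [Subgroup.mem_centralizer_iff] at hb1
    exact (hb1 a ha).symm
  intro x hx y hy
  have := h2 hy
  rw [Subgroup.mem_centralizer_iff] at this
  exact this x hx

/-- An abelian subgroup of a free group is contained in a cyclic subgroup
generated by an element with no torsion relations. -/
theorem abelian_subgroup_cyclic {β : Type*} (A : Subgroup (FreeGroup β))
    (hA : ∀ x ∈ A, ∀ y ∈ A, Commute x y) :
    (∀ x ∈ A, x = 1) ∨ ∃ c : FreeGroup β, (∀ k : ℤ, c ^ k = 1 → k = 0) ∧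
      ∀ x ∈ A, ∃ k : ℤ, x = c ^ k := by
  classical
  obtain ⟨T, ⟨bas⟩⟩ := (inferInstance : IsFreeGroup A).nonempty_basis
  set θ : FreeGroup T ≃* A := bas.repr.symm with hθ
  have hsub : Subsingleton T := by
    by_contra hns
    rw [not_subsingleton_iff_nontrivial] at hns
    obtain ⟨t₁, t₂, ht⟩ := hns
    apply of_not_commute ht
    have h1c := hA ((θ (FreeGroup.of t₁)) : FreeGroup β) (θ (FreeGroup.of t₁)).2
      ((θ (FreeGroup.of t₂)) : FreeGroup β) (θ (FreeGroup.of t₂)).2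
    have h1 : Commute (θ (FreeGroup.of t₁)) (θ (FreeGroup.of t₂)) :=
      Subtype.ext (by push_cast; exact h1c.eq)
    have h2 := h1.map θ.symm.toMonoidHom
    simpa using h2
  cases isEmpty_or_nonempty T with
  | inl he =>
    left
    intro x hx
    have h1 : θ.symm ⟨x, hx⟩ = 1 := isEmpty_eq_one _
    have h2 : (⟨x, hx⟩ : A) = 1 := by
      have := congrArg θ h1
      simpa using this
    exact congrArg Subtype.val h2
  | inr hne =>
    right
    obtain ⟨t₀⟩ := hne
    refine ⟨((θ (FreeGroup.of t₀)) : A), ?_, ?_⟩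
    · intro k hk
      have h1 : ((θ (FreeGroup.of t₀ ^ k) : A) : FreeGroup β) = 1 := by
        rw [map_zpow]
        rw [← SubgroupClass.coe_zpow] at hk
        exact hk
      have h2 : θ (FreeGroup.of t₀ ^ k) = 1 := Subtype.ext h1
      have h3 : FreeGroup.of t₀ ^ k = 1 := by
        apply θ.injective
        rw [h2, map_one]
      exact of_zpow_eq_one h3
    · intro x hx
      obtain ⟨k, hk⟩ := subsingleton_eq_pow t₀ (θ.symm ⟨x, hx⟩)
      refine ⟨k, ?_⟩
      have h1 : (⟨x, hx⟩ : A) = θ (FreeGroup.of t₀) ^ k := by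
        have := congrArg θ hk
        rw [MulEquiv.apply_symm_apply, map_zpow] at this
        exact this
      have := congrArg Subtype.val h1
      rw [SubgroupClass.coe_zpow] at this
      exact this

/-- An element commuting with a nontrivial element shares a common "root" with it. -/
theorem exists_root {β : Type*} {z y : FreeGroup β} (hz : z ≠ 1) (hy : Commute z y) :
    ∃ (c : FreeGroup β) (k l : ℤ), (∀ j : ℤ, c ^ j = 1 → j = 0) ∧ k ≠ 0 ∧ z = c ^ k ∧ y = c ^ l := by
  have hpair : ∀ a ∈ ({z, y} : Set (FreeGroup β)), ∀ b ∈ ({z, y} : Set (FreeGroup β)),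
      Commute a b := by
    rintro a (rfl | ha) b (rfl | hb)
    · exact Commute.refl _
    · rw [Set.mem_singleton_iff] at hb; subst hb; exact hy
    · rw [Set.mem_singleton_iff] at ha; subst ha; exact hy.symm
    · rw [Set.mem_singleton_iff] at ha hb; subst ha; subst hb; exact Commute.refl _
  have hA := closure_comm hpair
  rcases abelian_subgroup_cyclic _ hA with h1 | ⟨c, hc, hmem⟩
  · exact absurd (h1 z (Subgroup.subset_closure (Set.mem_insert _ _))) hz
  · obtain ⟨k, hk⟩ := hmem z (Subgroup.subset_closure (Set.mem_insert _ _))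
    obtain ⟨l, hl⟩ := hmem y (Subgroup.subset_closure
      (Set.mem_insert_iff.mpr (Or.inr rfl)))
    refine ⟨c, k, l, hc, ?_, hk, hl⟩
    rintro rfl
    rw [zpow_zero] at hk
    exact hz hk

theorem of_zpow_eq_of_zpow {S : Type*} {s t : S} (hst : s ≠ t) {k m : ℤ}
    (h : FreeGroup.of s ^ k = FreeGroup.of t ^ m) : k = 0 ∧ m = 0 := by
  classical
  constructor
  · have h2 := congrArg (FreeGroup.lift
      (fun r => if r = s then Multiplicative.ofAdd (1:ℤ) else 1)) h
    rw [map_zpow, map_zpow, FreeGroup.lift_apply_of, FreeGroup.lift_apply_of, if_pos rfl,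
      if_neg (Ne.symm hst), one_zpow] at h2
    have h3 := congrArg Multiplicative.toAdd h2
    rw [toAdd_zpow] at h3
    simpa using h3
  · have h2 := congrArg (FreeGroup.lift
      (fun r => if r = t then Multiplicative.ofAdd (1:ℤ) else 1)) h
    rw [map_zpow, map_zpow, FreeGroup.lift_apply_of, FreeGroup.lift_apply_of, if_pos rfl,
      if_neg hst, one_zpow] at h2
    have h3 := congrArg Multiplicative.toAdd h2
    rw [toAdd_zpow] at h3
    simpa using h3.symm

/-- Commutation is transitive on nontrivial elements of a free group. -/
theorem commute_trans {β : Type*} {z p q : FreeGroup β} (hz : z ≠ 1)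
    (hzp : Commute z p) (hzq : Commute z q) : Commute p q := by
  obtain ⟨c, k, l, -, hk0, hck, hcl⟩ := exists_root hz hzp
  obtain ⟨d, m, n, -, hm0, hdm, hdn⟩ := exists_root hz hzq
  have hcd : Commute c d := by
    by_contra hncd
    have hinj := free_pair hncd
    have heq : FreeGroup.of false ^ k = (FreeGroup.of true : FreeGroup Bool) ^ m := by
      apply hinj
      rw [map_zpow, map_zpow, FreeGroup.lift_apply_of, FreeGroup.lift_apply_of]
      show c ^ k = d ^ m
      rw [← hck, ← hdm]
    exact hk0 (of_zpow_eq_of_zpow (by simp) heq).1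
  rw [hcl, hdn]
  exact hcd.zpow_zpow l n

/-- Free groups are torsion free. -/
theorem freeGroup_not_isOfFinOrder {β : Type*} {x : FreeGroup β} (hx : x ≠ 1) :
    ¬IsOfFinOrder x := by
  intro hfin
  obtain ⟨n, hn, hxn⟩ := isOfFinOrder_iff_pow_eq_one.mp hfin
  obtain ⟨c, k, l, hc, hk0, hck, -⟩ := exists_root hx (Commute.refl x)
  have h1 : c ^ (k * (n:ℤ)) = 1 := by
    rw [zpow_mul, ← hck, zpow_natCast]
    exact hxn
  have h2 := hc _ h1
  have hn' : (n : ℤ) ≠ 0 := by exact_mod_cast hn.ne'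
  exact hk0 (by
    rcases mul_eq_zero.mp h2 with h | h
    · exact h
    · exact absurd h hn')


/-- exponent-sum homomorphism on the first generator -/
noncomputable def ea : FreeGroup Bool →* Multiplicative ℤ :=
  FreeGroup.lift (fun c : Bool => cond c 1 (Multiplicative.ofAdd (1:ℤ)))

lemma ea_ab (m : ℕ) : ea (FreeGroup.of false * FreeGroup.of true ^ m)
    = Multiplicative.ofAdd (1:ℤ) := by
  rw [ea, map_mul, map_pow, FreeGroup.lift_apply_of, FreeGroup.lift_apply_of]
  show Multiplicative.ofAdd (1:ℤ) * 1 ^ m = Multiplicative.ofAdd (1:ℤ)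
  rw [one_pow, mul_one]

theorem ab_ne_one (m : ℕ) : (FreeGroup.of false * FreeGroup.of true ^ m : FreeGroup Bool) ≠ 1 := by
  intro h
  have h1 := congrArg ea h
  rw [ea_ab, show ea 1 = 1 from map_one _] at h1
  have := congrArg Multiplicative.toAdd h1
  simpa using this

theorem not_commute_ab {m m' : ℕ} (hmm : m ≠ m') :
    ¬Commute (FreeGroup.of false * FreeGroup.of true ^ m)
      (FreeGroup.of false * FreeGroup.of true ^ m' : FreeGroup Bool) := by
  intro hcomm
  obtain ⟨c, k, l, -, hk0, hck, hcl⟩ := exists_root (ab_ne_one m) hcomm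
  set α : ℤ := Multiplicative.toAdd (ea c) with hα
  have h1 : k * α = 1 := by
    have := congrArg ea hck
    rw [ea_ab, map_zpow] at this
    have h2 := congrArg Multiplicative.toAdd this
    rw [toAdd_zpow] at h2
    simpa [hα, mul_comm] using h2.symm
  have h2 : l * α = 1 := by
    have := congrArg ea hcl
    rw [ea_ab, map_zpow] at this
    have h2 := congrArg Multiplicative.toAdd this
    rw [toAdd_zpow] at h2
    simpa [hα, mul_comm] using h2.symm
  have hαne : α ≠ 0 := by
    intro h0
    rw [h0, mul_zero] at h1
    exact one_ne_zero h1.symm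
  have hkl : k = l := by
    have : k * α = l * α := by rw [h1, h2]
    exact mul_right_cancel₀ hαne this
  have hxy : (FreeGroup.of false * FreeGroup.of true ^ m : FreeGroup Bool)
      = FreeGroup.of false * FreeGroup.of true ^ m' := by
    rw [hck, hcl, hkl]
  have h3 : (FreeGroup.of true : FreeGroup Bool) ^ m = FreeGroup.of true ^ m' :=
    mul_left_cancel hxy
  have h4 : (FreeGroup.of true : FreeGroup Bool) ^ ((m : ℤ) - (m' : ℤ)) = 1 := by
    rw [zpow_sub, zpow_natCast, zpow_natCast, h3, mul_inv_cancel]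
  have := of_zpow_eq_one h4
  omega

theorem zpow_eq_zero_of_not_finOrder {G : Type*} [Group G] {g : G}
    (h : ¬IsOfFinOrder g) {k : ℤ} (hk : g ^ k = 1) : k = 0 := by
  by_contra hk0
  apply h
  apply isOfFinOrder_iff_pow_eq_one.mpr
  refine ⟨k.natAbs, Int.natAbs_pos.mpr hk0, ?_⟩
  rcases Int.natAbs_eq k with he | he
  · rw [he] at hk
    rwa [zpow_natCast] at hk
  · rw [he] at hk
    rw [zpow_neg, zpow_natCast, inv_eq_one] at hk
    exact hk


theorem exists_zpowers_iso {G : Type*} [Group G] {g : G} (hg : ¬IsOfFinOrder g) :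
    ∃ e : FreeGroup Unit ≃* Subgroup.zpowers g, ((e (FreeGroup.of ())) : G) = g := by
  classical
  have hinj : Function.Injective
      (FreeGroup.lift (fun _ : Unit => (⟨g, Subgroup.mem_zpowers g⟩ : Subgroup.zpowers g))) := by
    intro w w' hww
    obtain ⟨k, rfl⟩ := subsingleton_eq_pow () w
    obtain ⟨l, rfl⟩ := subsingleton_eq_pow () w'
    rw [map_zpow, map_zpow, FreeGroup.lift_apply_of] at hww
    have hc := congrArg Subtype.val hww
    rw [SubgroupClass.coe_zpow, SubgroupClass.coe_zpow] at hc
    have h1 : g ^ (k - l) = 1 := by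
      rw [zpow_sub, hc, mul_inv_cancel]
    have h2 := zpow_eq_zero_of_not_finOrder hg h1
    have hkl : k = l := by omega
    rw [hkl]
  have hsurj : Function.Surjective
      (FreeGroup.lift (fun _ : Unit => (⟨g, Subgroup.mem_zpowers g⟩ : Subgroup.zpowers g))) := by
    rintro ⟨x, hx⟩
    rw [Subgroup.mem_zpowers_iff] at hx
    obtain ⟨k, hk⟩ := hx
    refine ⟨FreeGroup.of () ^ k, ?_⟩
    rw [map_zpow, FreeGroup.lift_apply_of]
    apply Subtype.ext
    rw [SubgroupClass.coe_zpow]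
    exact hk
  refine ⟨MulEquiv.ofBijective _ ⟨hinj, hsurj⟩, ?_⟩
  show ((FreeGroup.lift (fun _ : Unit => (⟨g, Subgroup.mem_zpowers g⟩ : Subgroup.zpowers g)))
    (FreeGroup.of ()) : G) = g
  rw [FreeGroup.lift_apply_of]

theorem naipair_of {G : Type*} [Group G] {β : Type*} (φ : G →* FreeGroup β) {f g₀ : G}
    (hford : ¬IsOfFinOrder f) (hgord : ¬IsOfFinOrder g₀)
    (hnc : ¬Commute (φ f) (φ g₀)) :
    Function.Injective
      (Monoid.Coprod.lift (Subgroup.zpowers f).subtype (Subgroup.zpowers g₀).subtype) := by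
  classical
  set u := φ f with hu
  set q := φ g₀ with hq
  set E' : Monoid.Coprod (FreeGroup Unit) (FreeGroup Unit) →* FreeGroup Bool :=
    Monoid.Coprod.lift (FreeGroup.lift fun _ : Unit => FreeGroup.of false)
      (FreeGroup.lift fun _ : Unit => FreeGroup.of true) with hE'
  set E'' : FreeGroup Bool →* Monoid.Coprod (FreeGroup Unit) (FreeGroup Unit) :=
    FreeGroup.lift (fun c : Bool => cond c (Monoid.Coprod.inr (FreeGroup.of ()))
      (Monoid.Coprod.inl (FreeGroup.of ()))) with hE''
  have hE : E''.comp E' = MonoidHom.id _ := by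
    apply Monoid.Coprod.hom_ext <;>
    · refine FreeGroup.ext_hom _ _ fun t => ?_
      cases t
      simp [hE', hE'']
  have hE'inj : Function.Injective E' := by
    have h2 : ∀ z, E'' (E' z) = z := by
      intro z
      have := DFunLike.congr_fun hE z
      simpa using this
    intro w w' hww
    rw [← h2 w, ← h2 w', hww]
  set W := FreeGroup.lift (fun c : Bool => cond c q u) with hW
  have hWinj : Function.Injective W := free_pair hnc
  set D' : Monoid.Coprod (FreeGroup Unit) (FreeGroup Unit) →* FreeGroup β :=
    Monoid.Coprod.lift (FreeGroup.lift fun _ : Unit => u) (FreeGroup.lift fun _ : Unit => q)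
    with hD'
  have hfac : D' = W.comp E' := by
    apply Monoid.Coprod.hom_ext <;>
    · refine FreeGroup.ext_hom _ _ fun t => ?_
      cases t
      simp [hD', hW, hE']
  have hD'inj : Function.Injective D' := by
    rw [hfac, MonoidHom.coe_comp]
    exact hWinj.comp hE'inj
  obtain ⟨ef, hef⟩ := exists_zpowers_iso hford
  obtain ⟨eg, heg⟩ := exists_zpowers_iso hgord
  set Ψ : Monoid.Coprod (FreeGroup Unit) (FreeGroup Unit) →*
      Monoid.Coprod (Subgroup.zpowers f) (Subgroup.zpowers g₀) :=
    Monoid.Coprod.lift (Monoid.Coprod.inl.comp ef.toMonoidHom)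
      (Monoid.Coprod.inr.comp eg.toMonoidHom) with hΨ
  set Ψ' : Monoid.Coprod (Subgroup.zpowers f) (Subgroup.zpowers g₀) →*
      Monoid.Coprod (FreeGroup Unit) (FreeGroup Unit) :=
    Monoid.Coprod.lift (Monoid.Coprod.inl.comp ef.symm.toMonoidHom)
      (Monoid.Coprod.inr.comp eg.symm.toMonoidHom) with hΨ'
  have hΨΨ' : ∀ z, Ψ (Ψ' z) = z := by
    have hcomp : Ψ.comp Ψ' = MonoidHom.id _ := by
      apply Monoid.Coprod.hom_ext
      · apply MonoidHom.ext
        intro z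
        simp [hΨ, hΨ']
      · apply MonoidHom.ext
        intro z
        simp [hΨ, hΨ']
    intro z
    have := DFunLike.congr_fun hcomp z
    simpa using this
  set C := Monoid.Coprod.lift (Subgroup.zpowers f).subtype (Subgroup.zpowers g₀).subtype with hC
  have hkey : φ.comp (C.comp Ψ) = D' := by
    apply Monoid.Coprod.hom_ext <;>
    · refine FreeGroup.ext_hom _ _ fun t => ?_
      cases t
      simp [hΨ, hC, hD', hef, heg, hu, hq]
  have hCΨinj : Function.Injective (C.comp Ψ) := by
    intro z z' hzz
    apply hD'inj
    rw [← hkey]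
    exact congrArg φ hzz
  intro z z' hzz
  have h1 : (C.comp Ψ) (Ψ' z) = (C.comp Ψ) (Ψ' z') := by
    simp only [MonoidHom.comp_apply]
    rw [hΨΨ', hΨΨ']
    exact hzz
  have h2 : Ψ' z = Ψ' z' := hCΨinj h1
  rw [← hΨΨ' z, ← hΨΨ' z', h2]


end Stmt5Aux


/-- Every non-abelian fully residually free group satisfies property `P_nai`. -/
theorem stmt5 {G : Type*} [Group G] (hna : ∃ a b : G, a * b ≠ b * a)
    (hres : ∀ F : Finset G, (∀ f ∈ F, f ≠ 1) →
      ∃ (β : Type) (φ : G →* FreeGroup β), ∀ f ∈ F, φ f ≠ 1) :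
    PNai G := by
  classical
  open Stmt5Aux in
  intro F hF
  obtain ⟨a, b, hab⟩ := hna
  -- `G` is torsion free
  have tor : ∀ g : G, g ≠ 1 → ¬IsOfFinOrder g := by
    intro g hg hfin
    obtain ⟨β, φ, hφ⟩ := hres {g} (by simpa using hg)
    exact Stmt5Aux.freeGroup_not_isOfFinOrder (hφ g (Finset.mem_singleton_self g))
      (φ.isOfFinOrder hfin)
  have hco : a * b * a⁻¹ * b⁻¹ ≠ 1 := by
    intro h
    apply hab
    rw [mul_inv_eq_one, mul_inv_eq_iff_eq_mul] at h
    exact h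
  obtain ⟨β, φ, hφ⟩ := hres (insert (a * b * a⁻¹ * b⁻¹) F) (by
    intro f hf
    rcases Finset.mem_insert.mp hf with rfl | hf
    · exact hco
    · exact hF f hf)
  have hφF : ∀ f ∈ F, φ f ≠ 1 := fun f hf => hφ f (Finset.mem_insert_of_mem hf)
  set x := φ a with hx
  set y := φ b with hy
  have hxy : ¬Commute x y := by
    intro h
    apply hφ _ (Finset.mem_insert_self _ _)
    simp only [map_mul, map_inv, ← hx, ← hy]
    rw [h.eq]
    group
  have hι := Stmt5Aux.free_pair hxy
  set ι := FreeGroup.lift (fun c : Bool => cond c y x) with hιdef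
  set q : ℕ → FreeGroup β := fun m => x * y ^ m with hqdef
  have hqι : ∀ m : ℕ, q m = ι (FreeGroup.of false * FreeGroup.of true ^ m) := by
    intro m
    rw [hqdef, hιdef, map_mul, map_pow, FreeGroup.lift_apply_of, FreeGroup.lift_apply_of]
    rfl
  have hqne : ∀ m : ℕ, q m ≠ 1 := by
    intro m h
    refine Stmt5Aux.ab_ne_one m (hι ?_)
    rw [← hqι, h, map_one]
  have hqnc : ∀ m m' : ℕ, m ≠ m' → ¬Commute (q m) (q m') := by
    intro m m' hmm hcomm
    apply Stmt5Aux.not_commute_ab hmm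
    have h1 : ι ((FreeGroup.of false * FreeGroup.of true ^ m) *
          (FreeGroup.of false * FreeGroup.of true ^ m'))
        = ι ((FreeGroup.of false * FreeGroup.of true ^ m') *
          (FreeGroup.of false * FreeGroup.of true ^ m)) := by
      rw [map_mul ι (FreeGroup.of false * FreeGroup.of true ^ m)
          (FreeGroup.of false * FreeGroup.of true ^ m'),
        map_mul ι (FreeGroup.of false * FreeGroup.of true ^ m')
          (FreeGroup.of false * FreeGroup.of true ^ m),
        ← hqι, ← hqι]
      exact hcomm.eq
    exact hι h1
  -- choose a good exponent m
  set Mset : Finset ℕ := Finset.range (F.card + 1) with hMset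
  have hbadcard : ∀ f ∈ F, (Mset.filter (fun m => Commute (φ f) (q m))).card ≤ 1 := by
    intro f hf
    rw [Finset.card_le_one]
    intro m hm m' hm'
    rw [Finset.mem_filter] at hm hm'
    by_contra hne
    exact hqnc m m' hne (Stmt5Aux.commute_trans (hφF f hf) hm.2 hm'.2)
  have hex : ∃ m ∈ Mset, ∀ f ∈ F, ¬Commute (φ f) (q m) := by
    by_contra hcon
    push_neg at hcon
    have hsub : Mset ⊆ F.biUnion (fun f => Mset.filter (fun m => Commute (φ f) (q m))) := by
      intro m hm
      obtain ⟨f, hf, hcomm⟩ := hcon m hm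
      exact Finset.mem_biUnion.mpr ⟨f, hf, Finset.mem_filter.mpr ⟨hm, hcomm⟩⟩
    have h1 := Finset.card_le_card hsub
    have h2 : (F.biUnion (fun f => Mset.filter (fun m => Commute (φ f) (q m)))).card
        ≤ F.card := by
      refine le_trans (Finset.card_biUnion_le) ?_
      calc ∑ f ∈ F, (Mset.filter (fun m => Commute (φ f) (q m))).card
          ≤ ∑ _f ∈ F, 1 := Finset.sum_le_sum hbadcard
        _ = F.card := by simp
    have h3 : Mset.card = F.card + 1 := by rw [hMset]; exact Finset.card_range _
    omega
  obtain ⟨m, _, hm⟩ := hex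
  have hφg₀ : φ (a * b ^ m) = q m := by
    rw [map_mul, map_pow, ← hx, ← hy, hqdef]
  have hg₀ne : a * b ^ m ≠ 1 := by
    intro h
    apply hqne m
    rw [← hφg₀, h, map_one]
  have hg₀ord : ¬IsOfFinOrder (a * b ^ m) := tor _ hg₀ne
  refine ⟨a * b ^ m, hg₀ord, ?_⟩
  intro f hf
  have hford : ¬IsOfFinOrder f := tor f (hF f hf)
  have hnc : ¬Commute (φ f) (φ (a * b ^ m)) := by
    rw [hφg₀]
    exact hm f hf
  exact Stmt5Aux.naipair_of φ hford hg₀ord hnc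
end

section
/- If a group G has property P_nai and N is a normal amenable subgroup of G, then N = {1}. -/
/-!
Let `f ≠ 1` lie in the normal subgroup `N` and let `g` be given by `P_nai` for `F = {f}`. In
`⟨f⟩ ∗ ⟨g⟩` the conjugates `gⁱ ⟨f⟩ g⁻ⁱ`, `i = 0, 1, 2`, generate their free product (ping-pong on
reduced words), so `N` contains a copy of `⟨f⟩ ∗ ⟨f⟩ ∗ ⟨f⟩`. Subgroups of amenable groups are
amenable, but a free product of three nontrivial groups is paradoxical: the three sets of words
beginning with a letter of a given factor are disjoint, and each absorbs a translate of its
complement, so each would have measure at least `1/2`.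
-/

open Function Monoid Cardinal

lemma IsAmenable.of_injective {H K : Type*} [Group H] [Group K] {φ : H →* K}
    (hφ : Injective φ) (hK : IsAmenable K) : IsAmenable H := by
  obtain ⟨T, hT, -⟩ := φ.range.exists_isComplement_right 1
  -- `π` is an `H`-equivariant retraction `K → H`, so pulling `m` back along it keeps invariance.
  let π : K → H := fun k => (MonoidHom.ofInjective hφ).symm (hT.equiv k).1
  have hπ : ∀ h k, π (φ h * k) = h * π k := fun h k => by
    simp only [π]
    rw [hT.equiv_mul_left_of_mem ⟨h, rfl⟩, MulEquiv.symm_apply_eq, map_mul,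
      MulEquiv.apply_symm_apply]
    rfl
  obtain ⟨m, hm_univ, hm_nonneg, hm_add, hm_inv⟩ := hK
  refine ⟨fun A => m (π ⁻¹' A), hm_univ, fun A => hm_nonneg _,
    fun A B hAB => by simpa only [Set.preimage_union] using hm_add _ _ (hAB.preimage π),
    fun h A => ?_⟩
  have : π ⁻¹' ((h * ·) '' A) = (φ h * ·) '' (π ⁻¹' A) := by
    ext k
    simp [Set.image_mul_left, ← map_inv, hπ]
  simp only [this, hm_inv]

lemma not_isAmenable_of_paradox {H : Type*} [Group H] (a : Fin 3 → H) (W : Fin 3 → Set H)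
    (hW : Pairwise (Disjoint on W)) (ha : ∀ i x, x ∉ W i → a i * x ∈ W i) :
    ¬ IsAmenable H := by
  rintro ⟨m, hm_univ, hm_nonneg, hm_add, hm_inv⟩
  have hm_mono : ∀ {A B : Set H}, A ⊆ B → m A ≤ m B := fun {A B} hAB => by
    have := hm_add _ _ (disjoint_sdiff_self_right (x := A) (y := B))
    rw [Set.union_sdiff_cancel hAB] at this
    linarith [hm_nonneg (B \ A)]
  have hhalf : ∀ i, 1 ≤ 2 * m (W i) := fun i => by
    have hcompl := hm_add _ _ (disjoint_compl_right (a := W i))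
    rw [Set.union_compl_self, hm_univ] at hcompl
    have hmove := hm_mono (A := (a i * ·) '' (W i)ᶜ) (by rintro _ ⟨x, hx, rfl⟩; exact ha i x hx)
    rw [hm_inv] at hmove
    linarith
  have hsum : m (W 0) + m (W 1) + m (W 2) ≤ 1 := by
    rw [← hm_add _ _ (hW (by decide)), ← hm_add _ _
      (Disjoint.union_left (hW (by decide)) (hW (by decide))), ← hm_univ]
    exact hm_mono (Set.subset_univ _)
  linarith [hhalf 0, hhalf 1, hhalf 2]

namespace Monoid.CoprodI

lemma Word.fstIdx_of_smul {ι : Type*} {M : ι → Type*} [∀ i, Monoid (M i)] [DecidableEq ι]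
    [∀ i, DecidableEq (M i)] {i : ι} {m : M i} (hm : m ≠ 1) {w : Word M}
    (hw : w.fstIdx ≠ some i) : (of m • w).fstIdx = some i := by
  rw [← Word.cons_eq_smul (h1 := hw) (h2 := hm), Word.fstIdx_cons]

lemma not_isAmenable_of_nontrivial {H : Fin 3 → Type*} [∀ i, Group (H i)]
    [∀ i, Nontrivial (H i)] : ¬ IsAmenable (CoprodI H) := by
  classical
  choose a ha using fun i => exists_ne (1 : H i)
  refine not_isAmenable_of_paradox (fun i => of (a i))
    (fun i => {x | (x • (Word.empty : Word H)).fstIdx = some i}) ?_ fun i x hx => ?_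
  · exact fun i j hij => Set.disjoint_left.mpr fun x hi hj =>
      hij (Option.some_injective _ (hi.symm.trans hj))
  · simpa only [Set.mem_ofPred_eq, mul_smul] using Word.fstIdx_of_smul (ha i) hx

theorem lift_conj_injective {κ : Type*} {M : κ → Type*} [∀ k, Group (M k)] {p q : κ}
    (hpq : p ≠ q) {ι : Type*} {s : ι → M q} (hs : Injective s) (hι : 3 ≤ #ι) :
    Injective (lift fun i => (MulAut.conj (of (s i))).toMonoidHom.comp (of : M p →* CoprodI M) :
      CoprodI (fun _ : ι => M p) →* CoprodI M) := by
  classical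
  have : Nontrivial ι := Cardinal.one_lt_iff_nontrivial.mp (lt_of_lt_of_le (by norm_num) hι)
  have hs' : ∀ {i j}, i ≠ j → (s i)⁻¹ * s j ≠ 1 := fun hij h => hij (hs (inv_mul_eq_one.mp h))
  have hsmul : ∀ (x y : M q) (w : Word M), of x • of y • w = of (x * y) • w := fun x y w => by
    rw [map_mul, mul_smul]
  -- `X i` consists of the words that, once `s i` is cancelled, do not start with a letter of `M q`.
  refine lift_injective_of_ping_pong _ (Or.inl hι)
    (fun i => {w : Word M | (of (s i)⁻¹ • w).fstIdx ≠ some q})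
    (fun i => ⟨of (s i) • Word.empty, by simp [Word.empty, Word.fstIdx]⟩)
    (fun i j hij => Set.disjoint_left.mpr fun w hi hj => hi ?_) fun i j hij a ha => ?_
  · rw [← mul_inv_cancel_right (s i)⁻¹ (s j), ← hsmul]
    exact Word.fstIdx_of_smul (hs' hij) hj
  · rintro _ ⟨w, hw, rfl⟩
    have hconj : of (s i)⁻¹ • (of (s i) * of a * (of (s i))⁻¹) • w =
        of a • of ((s i)⁻¹ * s j) • of (s j)⁻¹ • w := by
      simp only [smul_smul, map_mul, map_inv]
      group
    have hstart : (of ((s i)⁻¹ * s j) • of (s j)⁻¹ • w).fstIdx = some q :=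
      Word.fstIdx_of_smul (hs' hij) hw
    simp only [Set.mem_ofPred_eq, MonoidHom.comp_apply, MulEquiv.coe_toMonoidHom,
      MulAut.conj_apply]
    rw [hconj, Word.fstIdx_of_smul ha (by rw [hstart]; exact mt Option.some_inj.mp hpq.symm)]
    exact mt Option.some_inj.mp hpq

end Monoid.CoprodI

namespace Monoid.Coprod

universe u

abbrev factors (A B : Type u) : Bool → Type u := fun x => cond x B A

instance {A B : Type u} [Group A] [Group B] : ∀ x, Group (factors A B x)
  | false => ‹Group A›
  | true => ‹Group B›

variable {A B : Type u} [Group A] [Group B]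

def toCoprodI : A ∗ B →* CoprodI (factors A B) :=
  lift (CoprodI.of (M := factors A B) (i := false)) (CoprodI.of (M := factors A B) (i := true))

theorem lift_conj_inr_injective {ι : Type*} {s : ι → B} (hs : Injective s) (hι : 3 ≤ #ι) :
    Injective (CoprodI.lift fun i => (MulAut.conj (inr (s i))).toMonoidHom.comp inl :
      CoprodI (fun _ : ι => A) →* A ∗ B) := by
  have hcomp : toCoprodI.comp (CoprodI.lift fun i => (MulAut.conj (inr (s i))).toMonoidHom.comp
      (inl : A →* A ∗ B)) = CoprodI.lift fun i =>
        (MulAut.conj (CoprodI.of (M := factors A B) (i := true) (s i))).toMonoidHom.comp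
          (CoprodI.of (M := factors A B) (i := false)) :=
    CoprodI.ext_hom _ _ fun i => MonoidHom.ext fun a => by simp [toCoprodI]
  refine Injective.of_comp (f := toCoprodI) ?_
  rw [← MonoidHom.coe_comp, hcomp]
  exact CoprodI.lift_conj_injective (M := factors A B) (s := s) Bool.false_ne_true hs hι

end Monoid.Coprod

lemma NaiPair.lift_conj_zpow_injective {G : Type*} [Group G] {f g : G} (h : NaiPair f g)
    (hg : ¬ IsOfFinOrder g) {ι : Type*} {n : ι → ℤ} (hn : Injective n) (hι : 3 ≤ #ι) :
    Injective (CoprodI.lift fun i => (MulAut.conj (g ^ n i)).toMonoidHom.comp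
      (Subgroup.zpowers f).subtype) := by
  let g' : Subgroup.zpowers g := ⟨g, Subgroup.mem_zpowers g⟩
  have hs : Injective fun i => g' ^ n i :=
    fun i j hij => hn (injective_zpow_iff_not_isOfFinOrder.mpr hg (congrArg Subtype.val hij))
  have hcomp : (Coprod.lift (Subgroup.zpowers f).subtype (Subgroup.zpowers g).subtype).comp
      (CoprodI.lift fun i => (MulAut.conj (Coprod.inr (g' ^ n i))).toMonoidHom.comp Coprod.inl) =
      CoprodI.lift fun i => (MulAut.conj (g ^ n i)).toMonoidHom.comp (Subgroup.zpowers f).subtype :=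
    CoprodI.ext_hom _ _ fun i => MonoidHom.ext fun a => by
      simp only [MonoidHom.comp_apply, CoprodI.lift_of, MulEquiv.coe_toMonoidHom,
        MulAut.conj_apply]
      simp [g']
  rw [← hcomp, MonoidHom.coe_comp]
  exact h.comp (Coprod.lift_conj_inr_injective hs hι)

/-- In a group with property `P_nai`, every normal amenable subgroup is trivial. -/
theorem stmt9 {G : Type*} [Group G] (h : PNai G) :
    ∀ N : Subgroup G, N.Normal → IsAmenable N → N = ⊥ := by
  intro N hN hamen
  refine (Subgroup.eq_bot_iff_forall N).mpr fun f hfN => by_contra fun hf => ?_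
  obtain ⟨g, hg, hnai⟩ := h {f} (by simpa using hf)
  have : Nontrivial (Subgroup.zpowers f) :=
    nontrivial_of_ne ⟨f, Subgroup.mem_zpowers f⟩ 1 (by simpa using hf)
  let φ := CoprodI.lift fun i : Fin 3 => (MulAut.conj (g ^ ((i : ℕ) : ℤ))).toMonoidHom.comp
    (Subgroup.zpowers f).subtype
  have hφ : Injective φ := (hnai f (Finset.mem_singleton_self f)).lift_conj_zpow_injective hg
    (Nat.cast_injective.comp Fin.val_injective) (by simp)
  have hφN : ∀ x, φ x ∈ N := fun x => CoprodI.lift_range_le _ _ (fun i => by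
    rintro _ ⟨a, rfl⟩
    exact hN.conj_mem _ (Subgroup.zpowers_le.mpr hfN a.2) _) ⟨x, rfl⟩
  have hφN_inj : Injective (φ.codRestrict N hφN) := fun x y hxy => hφ (congrArg Subtype.val hxy)
  exact CoprodI.not_isAmenable_of_nontrivial (hamen.of_injective hφN_inj)
end

section
/- Let f be an element of a group G of order at least 2 and g₀ an element of infinite order such that ⟨f, g₀⟩ is canonically isomorphic to ⟨f⟩ * ⟨g₀⟩. Then the subgroup ⟨g₀, f g₀ f⁻¹⟩ is a free group of rank 2. -/
open Monoid CoprodI Subgroup Monoid.CoprodI.Word Pointwise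

namespace Stmt10

universe u
variable {A B : Type u} [Group A] [Group B]

/-- The family `Bool → Type` with value `A` at `false` and `B` at `true`. -/
abbrev M (A B : Type u) : Bool → Type u := fun b => Bool.rec A B b

noncomputable instance : ∀ b, Group (M A B b) := fun b => by
  cases b
  exacts [‹Group A›, ‹Group B›]

noncomputable instance : ∀ b, DecidableEq (M A B b) := fun _ => Classical.decEq _

/-- inclusion of A -/
noncomputable abbrev oA : A →* CoprodI (M A B) := @CoprodI.of Bool (M A B) _ false
/-- inclusion of B -/
noncomputable abbrev oB : B →* CoprodI (M A B) := @CoprodI.of Bool (M A B) _ true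

section WordLemmas

variable {ι : Type*} [DecidableEq ι] {N : ι → Type*} [∀ i, Group (N i)] [∀ i, DecidableEq (N i)]

lemma smul_eq_cons {i} (m : N i) (w : Word N) (h1 : fstIdx w ≠ some i) (h2 : m ≠ 1) :
    CoprodI.of m • w = cons m w h1 h2 := cons_eq_smul.symm

lemma smul_cons_same {i} (m m' : N i) (w : Word N) (h1 h2) :
    CoprodI.of m • (cons m' w h1 h2) = CoprodI.of (m * m') • w := by
  rw [cons_eq_smul, smul_smul, ← MonoidHom.map_mul]

lemma word_cases (w : Word N) :
    w = Word.empty ∨ ∃ (i : ι) (m : N i) (w' : Word N) (h1 : w'.fstIdx ≠ some i) (h2 : m ≠ 1), w = cons m w' h1 h2 := by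
  induction w using consRecOn with
  | empty => exact Or.inl rfl
  | cons i m w h1 h2 _ => exact Or.inr ⟨i, m, w, h1, h2, rfl⟩

end WordLemmas

section Exp

variable (u : B) (hB : ∀ y : B, y ∈ Subgroup.zpowers u)

/-- the exponent of an element of B with respect to u -/
noncomputable def ee (y : B) : ℤ := (Subgroup.mem_zpowers_iff.mp (hB y)).choose

lemma ee_spec (y : B) : u ^ (ee u hB y) = y :=
  (Subgroup.mem_zpowers_iff.mp (hB y)).choose_spec

variable (hu : ¬ IsOfFinOrder u)
include hu

lemma ee_eq {n : ℤ} {y : B} (h : u ^ n = y) : ee u hB y = n := by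
  have hinj : Function.Injective (fun n : ℤ => u ^ n) :=
    injective_zpow_iff_not_isOfFinOrder.mpr hu
  exact hinj (show u ^ ee u hB y = u ^ n by rw [ee_spec, h])

lemma ee_one : ee u hB 1 = 0 := ee_eq u hB hu (zpow_zero u)

lemma ee_u : ee u hB u = 1 := ee_eq u hB hu (zpow_one u)

lemma ee_inv (y : B) : ee u hB y⁻¹ = - ee u hB y :=
  ee_eq u hB hu (by rw [zpow_neg, ee_spec])

lemma ee_mul (x y : B) : ee u hB (x * y) = ee u hB x + ee u hB y :=
  ee_eq u hB hu (by rw [zpow_add, ee_spec, ee_spec])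

lemma ee_ne_zero {y : B} (hy : y ≠ 1) : ee u hB y ≠ 0 := fun h => by
  refine hy ?_
  have h2 := ee_spec u hB y
  rw [h, zpow_zero] at h2
  exact h2.symm

lemma ne_one_of_ee {y : B} (hy : ee u hB y ≠ 0) : y ≠ 1 := fun h => by
  rw [h, ee_one u hB hu] at hy
  exact hy rfl

end Exp

section Sets

variable (s : A) (u : B) (hB : ∀ y : B, y ∈ Subgroup.zpowers u)

/-- words whose first letter is in B with exponent satisfying P -/
def BH (P : ℤ → Prop) : Set (Word (M A B)) :=
  {w | ∃ (y : B) (l : List (Σ b, M A B b)),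
    w.toList = ⟨true, y⟩ :: l ∧ P (ee u hB y)}

/-- words whose first letter is exactly s and second letter in B with exponent satisfying P -/
def AH (P : ℤ → Prop) : Set (Word (M A B)) :=
  {w | ∃ (y : B) (l : List (Σ b, M A B b)),
    w.toList = ⟨false, s⟩ :: ⟨true, y⟩ :: l ∧ P (ee u hB y)}

end Sets

section Core

variable (s : A) (u : B) (hB : ∀ y : B, y ∈ Subgroup.zpowers u) (hu : ¬ IsOfFinOrder u)

include hu in
lemma signB (P Q : ℤ → Prop) (hP0 : ∀ a, P a → a ≠ 0)
    (hPQ : ∀ a b : ℤ, P a → ¬ Q b → b ≠ 0 → P (a + b))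
    (v : B) (hv : P (ee u hB v)) (w : Word (M A B)) (hw : w ∉ BH u hB Q) :
    (oB v : CoprodI (M A B)) • w ∈ BH u hB P := by
  have hv1 : v ≠ 1 := ne_one_of_ee u hB hu (hP0 _ hv)
  rcases word_cases w with rfl | ⟨i, m, w', h1, h2, rfl⟩
  · rw [smul_eq_cons (N := M A B) (i := true) v Word.empty (by simp [fstIdx, Word.empty]) hv1]
    exact ⟨v, _, rfl, hv⟩
  · cases i with
    | false =>
      rw [smul_eq_cons (N := M A B) (i := true) v _ (by simp) hv1]
      exact ⟨v, _, rfl, hv⟩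
    | true =>
      have hQ : ¬ Q (ee u hB m) := fun hq => hw ⟨m, w'.toList, rfl, hq⟩
      have hm0 : ee u hB m ≠ 0 := ee_ne_zero u hB hu h2
      have hP' : P (ee u hB (v * m)) := by
        rw [ee_mul u hB hu]; exact hPQ _ _ hv hQ hm0
      have hvm : v * m ≠ 1 := ne_one_of_ee u hB hu (hP0 _ hP')
      rw [smul_cons_same (N := M A B), smul_eq_cons (N := M A B) _ _ h1 hvm]
      exact ⟨v * m, _, rfl, hP'⟩

include hu in
lemma signA (hs : s ≠ 1) (P Q : ℤ → Prop) (hP0 : ∀ a, P a → a ≠ 0)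
    (hPQ : ∀ a b : ℤ, P a → ¬ Q b → b ≠ 0 → P (a + b))
    (v : B) (hv : P (ee u hB v)) (w : Word (M A B)) (hw : w ∉ AH s u hB Q) :
    ((oA s : CoprodI (M A B)) * oB v * (oA s)⁻¹) • w ∈ AH s u hB P := by
  have hv1 : v ≠ 1 := ne_one_of_ee u hB hu (hP0 _ hv)
  have hs' : s⁻¹ ≠ 1 := inv_ne_one.2 hs
  have hsm : ((oA s : CoprodI (M A B)) * oB v * (oA s)⁻¹) • w = (oA s : CoprodI (M A B)) • (oB v : CoprodI (M A B)) • (oA (s⁻¹) : CoprodI (M A B)) • w := by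
    rw [← map_inv, mul_smul, mul_smul]
  rw [hsm]
  rcases word_cases w with rfl | ⟨i, m, w', h1, h2, rfl⟩
  · rw [smul_eq_cons (N := M A B) (i := false) s⁻¹ Word.empty (fstIdx_ne_iff.mpr (by simp [Word.empty])) hs',
      smul_eq_cons (N := M A B) (i := true) v _ (by simp) hv1,
      smul_eq_cons (N := M A B) (i := false) s _ (by simp) hs]
    exact ⟨v, _, rfl, hv⟩
  · cases i with
    | true =>
      rw [smul_eq_cons (N := M A B) (i := false) s⁻¹ _ (by simp) hs',
        smul_eq_cons (N := M A B) (i := true) v _ (by simp) hv1,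
        smul_eq_cons (N := M A B) (i := false) s _ (by simp) hs]
      exact ⟨v, _, rfl, hv⟩
    | false =>
      by_cases hxs : m = s
      · have hw1 : (oA (s⁻¹) : CoprodI (M A B)) • (cons m w' h1 h2) = w' := by
          rw [smul_cons_same (N := M A B), hxs, inv_mul_cancel, map_one, one_smul]
        rw [hw1]
        rcases word_cases w' with rfl | ⟨i', m', w'', h1', h2', rfl⟩
        · rw [smul_eq_cons (N := M A B) (i := true) v Word.empty (fstIdx_ne_iff.mpr (by simp [Word.empty])) hv1,
            smul_eq_cons (N := M A B) (i := false) s _ (by simp) hs]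
          exact ⟨v, _, rfl, hv⟩
        · cases i' with
          | false => exact absurd (by simp) h1
          | true =>
            have hQ : ¬ Q (ee u hB m') := fun hq =>
              hw ⟨m', w''.toList, by simp only [Word.cons_toList]; rw [hxs], hq⟩
            have hm0 : ee u hB m' ≠ 0 := ee_ne_zero u hB hu h2'
            have hP' : P (ee u hB (v * m')) := by
              rw [ee_mul u hB hu]; exact hPQ _ _ hv hQ hm0
            have hvm : v * m' ≠ 1 := ne_one_of_ee u hB hu (hP0 _ hP')
            rw [smul_cons_same (N := M A B), smul_eq_cons (N := M A B) _ _ h1' hvm,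
              smul_eq_cons (N := M A B) (i := false) s _ (by simp) hs]
            exact ⟨v * m', _, rfl, hP'⟩
      · have hne : s⁻¹ * m ≠ 1 := by
          rw [Ne, inv_mul_eq_one]
          exact fun hh => hxs hh.symm
        rw [smul_cons_same (N := M A B), smul_eq_cons (N := M A B) _ _ h1 hne,
          smul_eq_cons (N := M A B) (i := true) v _ (by simp) hv1,
          smul_eq_cons (N := M A B) (i := false) s _ (by simp) hs]
        exact ⟨v, _, rfl, hv⟩

lemma BH_disj (P Q : ℤ → Prop) (h : ∀ z, P z → Q z → False) :
    Disjoint (BH u hB P) (BH (A := A) u hB Q) := by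
  rw [Set.disjoint_left]
  rintro w ⟨y, l, hl, hy⟩ ⟨y', l', hl', hy'⟩
  rw [hl] at hl'
  obtain ⟨rfl, -⟩ : y = y' ∧ l = l' := by simpa using hl'
  exact h _ hy hy'

lemma BA_disj (P Q : ℤ → Prop) :
    Disjoint (BH u hB P) (AH s u hB Q) := by
  rw [Set.disjoint_left]
  rintro w ⟨y, l, hl, hy⟩ ⟨y', l', hl', hy'⟩
  rw [hl] at hl'
  simp at hl'

lemma AH_disj (P Q : ℤ → Prop) (h : ∀ z, P z → Q z → False) :
    Disjoint (AH s u hB P) (AH s u hB Q) := by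
  rw [Set.disjoint_left]
  rintro w ⟨y, l, hl, hy⟩ ⟨y', l', hl', hy'⟩
  rw [hl] at hl'
  obtain ⟨rfl, -⟩ : y = y' ∧ l = l' := by simpa using hl'
  exact h _ hy hy'

end Core

section Aux

lemma fin2 (p : Fin 2 → Prop) (h0 : p 0) (h1 : p 1) : ∀ i, p i := by
  intro i
  fin_cases i
  · exact h0
  · exact h1

theorem aux (s : A) (hs : s ≠ 1) (u : B) (hu : ¬ IsOfFinOrder u)
    (hB : ∀ y : B, y ∈ Subgroup.zpowers u) :
    Function.Injective
      (FreeGroup.lift ![(oB u : CoprodI (M A B)), oA s * oB u * (oA s)⁻¹] :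
        FreeGroup (Fin 2) →* CoprodI (M A B)) := by
  have hu1 : u ≠ 1 := fun h => hu (h ▸ IsOfFinOrder.one)
  have heu : ee u hB u = 1 := ee_u u hB hu
  set a : Fin 2 → CoprodI (M A B) :=
    ![(oB u : CoprodI (M A B)), oA s * oB u * (oA s)⁻¹] with ha
  let X : Fin 2 → Set (Word (M A B)) :=
    ![BH u hB (fun z => 0 < z), AH s u hB (fun z => 0 < z)]
  let Y : Fin 2 → Set (Word (M A B)) :=
    ![BH u hB (fun z => z < 0), AH s u hB (fun z => z < 0)]
  have hX0 : X 0 = BH u hB (fun z => 0 < z) := rfl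
  have hX1 : X 1 = AH s u hB (fun z => 0 < z) := rfl
  have hY0 : Y 0 = BH u hB (fun z => z < 0) := rfl
  have hY1 : Y 1 = AH s u hB (fun z => z < 0) := rfl
  have ha0 : a 0 = (oB u : CoprodI (M A B)) := rfl
  have ha1 : a 1 = (oA s : CoprodI (M A B)) * oB u * (oA s)⁻¹ := rfl
  have hXd : Pairwise (Function.onFun Disjoint X) := by
    have key : ∀ i : Fin 2, ∀ j : Fin 2, i ≠ j → Disjoint (X i) (X j) := by
      refine fin2 _ (fin2 _ ?_ ?_) (fin2 _ ?_ ?_)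
      · exact fun h => absurd rfl h
      · intro _
        show Disjoint (X 0) (X 1)
        rw [hX0, hX1]
        exact BA_disj s u hB _ _
      · intro _
        show Disjoint (X 1) (X 0)
        rw [hX0, hX1]
        exact (BA_disj s u hB _ _).symm
      · exact fun h => absurd rfl h
    exact fun i j hij => key i j hij
  have hYd : Pairwise (Function.onFun Disjoint Y) := by
    have key : ∀ i : Fin 2, ∀ j : Fin 2, i ≠ j → Disjoint (Y i) (Y j) := by
      refine fin2 _ (fin2 _ ?_ ?_) (fin2 _ ?_ ?_)
      · exact fun h => absurd rfl h
      · intro _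
        show Disjoint (Y 0) (Y 1)
        rw [hY0, hY1]
        exact BA_disj s u hB _ _
      · intro _
        show Disjoint (Y 1) (Y 0)
        rw [hY0, hY1]
        exact (BA_disj s u hB _ _).symm
      · exact fun h => absurd rfl h
    exact fun i j hij => key i j hij
  have hXYd : ∀ i j, Disjoint (X i) (Y j) := by
    refine fin2 _ (fin2 _ ?_ ?_) (fin2 _ ?_ ?_)
    · rw [hX0, hY0]
      exact BH_disj u hB _ _ (fun z h1 h2 => by omega)
    · rw [hX0, hY1]
      exact BA_disj s u hB _ _
    · rw [hX1, hY0]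
      exact (BA_disj s u hB _ _).symm
    · rw [hX1, hY1]
      exact AH_disj s u hB _ _ (fun z h1 h2 => by omega)
  have hXne : ∀ i, (X i).Nonempty := by
    refine fin2 _ ?_ ?_
    · rw [hX0]
      exact ⟨cons (M := M A B) (i := true) u Word.empty (by simp [fstIdx, Word.empty]) hu1,
        ⟨u, _, rfl, by rw [heu]; norm_num⟩⟩
    · rw [hX1]
      exact ⟨cons (M := M A B) (i := false) s
          (cons (M := M A B) (i := true) u Word.empty (fstIdx_ne_iff.mpr (by simp [Word.empty])) hu1)
          (by simp) hs,
        ⟨u, _, rfl, by rw [heu]; norm_num⟩⟩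
  have hXact : ∀ i, a i • (Y i)ᶜ ⊆ X i := by
    refine fin2 _ ?_ ?_
    · rw [ha0, hY0, hX0]
      rintro x ⟨w, hw, rfl⟩
      exact signB u hB hu _ _ (fun z h => by omega) (fun z1 z2 h1 h2 h3 => by omega)
        u (by rw [heu]; norm_num) w hw
    · rw [ha1, hY1, hX1]
      rintro x ⟨w, hw, rfl⟩
      exact signA s u hB hu hs _ _ (fun z h => by omega) (fun z1 z2 h1 h2 h3 => by omega)
        u (by rw [heu]; norm_num) w hw
  have hYact : ∀ i, (a i)⁻¹ • (X i)ᶜ ⊆ Y i := by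
    refine fin2 _ ?_ ?_
    · have hai : (a 0)⁻¹ = (oB u⁻¹ : CoprodI (M A B)) := by
        rw [ha0, ← map_inv (oB : B →* CoprodI (M A B)) u]
      rw [hai, hX0, hY0]
      rintro x ⟨w, hw, rfl⟩
      exact signB u hB hu _ _ (fun z h => by omega) (fun z1 z2 h1 h2 h3 => by omega)
        u⁻¹ (by rw [ee_inv u hB hu, heu]; norm_num) w hw
    · have hai : (a 1)⁻¹ = ((oA s : CoprodI (M A B)) * oB u⁻¹ * (oA s)⁻¹) := by
        rw [ha1, map_inv (oB : B →* CoprodI (M A B)) u]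
        group
      rw [hai, hX1, hY1]
      rintro x ⟨w, hw, rfl⟩
      exact signA s u hB hu hs _ _ (fun z h => by omega) (fun z1 z2 h1 h2 h3 => by omega)
        u⁻¹ (by rw [ee_inv u hB hu, heu]; norm_num) w hw
  set a' : ULift.{u} (Fin 2) → CoprodI (M A B) := fun i => a i.down with ha'
  have hfac : (FreeGroup.lift a : FreeGroup (Fin 2) →* CoprodI (M A B)) =
      (FreeGroup.lift a').comp (FreeGroup.freeGroupCongr Equiv.ulift.symm).toMonoidHom := by
    ext i
    simp [ha']
  have hinj' : Function.Injective (FreeGroup.lift a' : FreeGroup (ULift.{u} (Fin 2)) →* _) := by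
    apply @FreeGroup.injective_lift_of_ping_pong (ULift.{u} (Fin 2)) _ (CoprodI (M A B)) _ a'
      (Word (M A B)) _ (fun i => X i.down) (fun i => Y i.down)
    · exact fun i => hXne i.down
    · exact fun i j hij => hXd (fun hd => hij (ULift.ext _ _ hd))
    · exact fun i j hij => hYd (fun hd => hij (ULift.ext _ _ hd))
    · exact fun i j => hXYd i.down j.down
    · exact fun i => hXact i.down
    · exact fun i => hYact i.down
  rw [hfac]
  exact hinj'.comp (MulEquiv.injective _)

end Aux

end Stmt10

section Final

open Monoid Subgroup

theorem stmt10' {G : Type*} [Group G] (f g₀ : G) (hf : f ≠ 1)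
    (hg : ¬ IsOfFinOrder g₀)
    (h : Function.Injective
      (Monoid.Coprod.lift (Subgroup.zpowers f).subtype (Subgroup.zpowers g₀).subtype)) :
    Function.Injective (FreeGroup.lift ![g₀, f * g₀ * f⁻¹] : FreeGroup (Fin 2) →* G) := by
  classical
  set A' := Subgroup.zpowers f with hA'
  set B' := Subgroup.zpowers g₀ with hB'
  let s : ↥A' := ⟨f, Subgroup.mem_zpowers f⟩
  let u : ↥B' := ⟨g₀, Subgroup.mem_zpowers g₀⟩
  have hs : s ≠ 1 := fun hh => hf (congrArg Subtype.val hh)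
  have hu : ¬ IsOfFinOrder u := fun hh => hg (by simpa using B'.subtype.isOfFinOrder hh)
  have hB : ∀ y : ↥B', y ∈ Subgroup.zpowers u := by
    intro y
    rcases Subgroup.mem_zpowers_iff.mp y.2 with ⟨n, hn⟩
    refine Subgroup.mem_zpowers_iff.mpr ⟨n, ?_⟩
    ext
    simpa using hn
  have hψ := Stmt10.aux s hs u hu hB
  let φ : Monoid.CoprodI (Stmt10.M ↥A' ↥B') →* G :=
    Monoid.CoprodI.lift (fun b => Bool.rec A'.subtype B'.subtype b)
  let e1 : Monoid.CoprodI (Stmt10.M ↥A' ↥B') →* Monoid.Coprod ↥A' ↥B' :=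
    Monoid.CoprodI.lift (fun b => Bool.rec Monoid.Coprod.inl Monoid.Coprod.inr b)
  let e2 : Monoid.Coprod ↥A' ↥B' →* Monoid.CoprodI (Stmt10.M ↥A' ↥B') :=
    Monoid.Coprod.lift Stmt10.oA Stmt10.oB
  have he21 : ∀ x, e2 (e1 x) = x := by
    have h12 : e2.comp e1 = MonoidHom.id _ := by
      apply Monoid.CoprodI.ext_hom
      intro i
      cases i <;> ext x <;>
        simp [e1, e2, Stmt10.oA, Stmt10.oB, Monoid.CoprodI.lift_of]
    intro x
    exact DFunLike.congr_fun h12 x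
  have hφeq : φ = (Monoid.Coprod.lift A'.subtype B'.subtype).comp e1 := by
    apply Monoid.CoprodI.ext_hom
    intro i
    cases i <;> ext x <;>
      (simp [φ, e1, Monoid.CoprodI.lift_of, Subgroup.coe_subtype]; try rfl)
  have hφinj : Function.Injective φ := by
    intro x y hxy
    rw [hφeq] at hxy
    simp only [MonoidHom.coe_comp, Function.comp_apply] at hxy
    have h2 : e1 x = e1 y := h hxy
    calc x = e2 (e1 x) := (he21 x).symm
    _ = e2 (e1 y) := by rw [h2]
    _ = y := he21 y
  have hfac : (FreeGroup.lift ![g₀, f * g₀ * f⁻¹] : FreeGroup (Fin 2) →* G)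
      = φ.comp (FreeGroup.lift
          ![(Stmt10.oB u : Monoid.CoprodI (Stmt10.M ↥A' ↥B')),
            Stmt10.oA s * Stmt10.oB u * (Stmt10.oA s)⁻¹]) := by
    ext i
    fin_cases i <;>
      (simp [φ, Stmt10.oA, Stmt10.oB, Monoid.CoprodI.lift_of, s, u, Subgroup.coe_subtype]; try rfl)
  rw [hfac, MonoidHom.coe_comp]
  exact hφinj.comp hψ

end Final


/-- If `f ≠ 1`, `g₀` has infinite order and `⟨f, g₀⟩` is canonically isomorphic to
`⟨f⟩ ∗ ⟨g₀⟩`, then `g₀` and `f g₀ f⁻¹` generate a free group of rank 2. -/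
theorem stmt10 {G : Type*} [Group G] (f g₀ : G) (hf : f ≠ 1)
    (hg : ¬ IsOfFinOrder g₀) (h : NaiPair f g₀) :
    Function.Injective (FreeGroup.lift ![g₀, f * g₀ * f⁻¹] : FreeGroup (Fin 2) →* G) :=
  stmt10' f g₀ hf hg h
end
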